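/- arXiv:2505.21424 — 10 statements merged into one kernel-verified Lean document; each statement's English description precedes it below -/
import Mathlib

section
/- Let τ > 0, κ ∈ ℝ, and let q₀, q₁ : ℝ × ℝ → ℂ be continuously differentiable functions satisfying the NLSH system pointwise on ℝ × ℝ. Then for all (x,t), ∂ₜ(|q₀(x,t)|² + τ|q₁(x,t)|²) = i ∂ₓ(q₀*(x,t) q₁(x,t) − q₀(x,t) q₁*(x,t)), where z* denotes the complex conjugate of z. That is, the density |q₀|² + τ|q₁|² (whose negated integral is the modified mass Ī₁) satisfies a local conservation law. -/
/-- For C¹ solutions of the NLSH system, the density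
|q₀|² + τ|q₁|² satisfies the local conservation law
∂ₜ(|q₀|² + τ|q₁|²) = i ∂ₓ(q₀* q₁ − q₀ q₁*). -/
theorem nlsh_mass_local_conservation (τ κ : ℝ) (hτ : 0 < τ)
    (q₀ q₁ : ℝ → ℝ → ℂ)
    (hq₀ : ContDiff ℝ 1 (fun p : ℝ × ℝ => q₀ p.1 p.2))
    (hq₁ : ContDiff ℝ 1 (fun p : ℝ × ℝ => q₁ p.1 p.2))
    (heq₀ : ∀ x t : ℝ,
      Complex.I * deriv (fun s => q₀ x s) t + deriv (fun y => q₁ y t) x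
        = -(κ : ℂ) * ((‖q₀ x t‖ : ℂ)) ^ 2 * q₀ x t)
    (heq₁ : ∀ x t : ℝ,
      Complex.I * (τ : ℂ) * deriv (fun s => q₁ x s) t
        = deriv (fun y => q₀ y t) x - q₁ x t) :
    ∀ x t : ℝ,
      deriv (fun s => ((‖q₀ x s‖ : ℂ)) ^ 2
          + (τ : ℂ) * ((‖q₁ x s‖ : ℂ)) ^ 2) t
      = Complex.I * deriv (fun y =>
          (starRingEnd ℂ) (q₀ y t) * q₁ y t - q₀ y t * (starRingEnd ℂ) (q₁ y t)) x := by
  intro x t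
  have hd₀ := hq₀.differentiable one_ne_zero
  have hd₁ := hq₁.differentiable one_ne_zero
  -- partial differentiability
  have hAd : DifferentiableAt ℝ (fun s => q₀ x s) t :=
    (hd₀ (x, t)).comp t ((differentiableAt_const x).prodMk differentiableAt_id)
  have hCd : DifferentiableAt ℝ (fun s => q₁ x s) t :=
    (hd₁ (x, t)).comp t ((differentiableAt_const x).prodMk differentiableAt_id)
  have hBd : DifferentiableAt ℝ (fun y => q₀ y t) x :=
    (hd₀ (x, t)).comp (f := fun y : ℝ => (y, t)) x (differentiableAt_fun_id.prodMk (differentiableAt_const t))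
  have hDd : DifferentiableAt ℝ (fun y => q₁ y t) x :=
    (hd₁ (x, t)).comp (f := fun y : ℝ => (y, t)) x (differentiableAt_fun_id.prodMk (differentiableAt_const t))
  set A := deriv (fun s => q₀ x s) t with hAdef
  set C := deriv (fun s => q₁ x s) t with hCdef
  set B := deriv (fun y => q₀ y t) x with hBdef
  set D := deriv (fun y => q₁ y t) x with hDdef
  have hA : HasDerivAt (fun s => q₀ x s) A t := hAd.hasDerivAt
  have hC : HasDerivAt (fun s => q₁ x s) C t := hCd.hasDerivAt
  have hB : HasDerivAt (fun y => q₀ y t) B x := hBd.hasDerivAt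
  have hD : HasDerivAt (fun y => q₁ y t) D x := hDd.hasDerivAt
  set u := q₀ x t with hu
  set v := q₁ x t with hv
  -- rewrite the time-derivative function
  have hfun : (fun s => ((‖q₀ x s‖ : ℂ)) ^ 2
          + (τ : ℂ) * ((‖q₁ x s‖ : ℂ)) ^ 2)
      = fun s => q₀ x s * (starRingEnd ℂ) (q₀ x s)
          + (τ : ℂ) * (q₁ x s * (starRingEnd ℂ) (q₁ x s)) := by
    funext s
    rw [Complex.mul_conj, Complex.mul_conj]
    norm_cast
    simp [Complex.normSq_eq_norm_sq]
  have hL : HasDerivAt (fun s => ((‖q₀ x s‖ : ℂ)) ^ 2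
          + (τ : ℂ) * ((‖q₁ x s‖ : ℂ)) ^ 2)
      ((A * (starRingEnd ℂ) u + u * (starRingEnd ℂ) A)
        + (τ : ℂ) * (C * (starRingEnd ℂ) v + v * (starRingEnd ℂ) C)) t := by
    rw [hfun]
    exact (hA.mul hA.star).add ((hC.mul hC.star).const_mul (τ : ℂ))
  have hR : HasDerivAt (fun y =>
          (starRingEnd ℂ) (q₀ y t) * q₁ y t - q₀ y t * (starRingEnd ℂ) (q₁ y t))
      (((starRingEnd ℂ) B * v + (starRingEnd ℂ) u * D)
        - (B * (starRingEnd ℂ) v + u * (starRingEnd ℂ) D)) x :=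
    (hB.star.mul hD).sub (hB.mul hD.star)
  rw [hL.deriv, hR.deriv]
  -- algebraic identity from the PDEs
  have e1 : Complex.I * A + D = -(κ : ℂ) * ((‖u‖ : ℂ)) ^ 2 * u := heq₀ x t
  have e2 : Complex.I * (τ : ℂ) * C = B - v := heq₁ x t
  have e1c : -Complex.I * (starRingEnd ℂ) A + (starRingEnd ℂ) D
      = -(κ : ℂ) * ((‖u‖ : ℂ)) ^ 2 * (starRingEnd ℂ) u := by
    have := congrArg (starRingEnd ℂ) e1
    simpa [map_add, map_mul, map_pow, Complex.conj_I, Complex.conj_ofReal,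
      neg_mul, mul_comm, mul_left_comm] using this
  have e2c : -(Complex.I * ((τ : ℂ) * (starRingEnd ℂ) C))
      = (starRingEnd ℂ) B - (starRingEnd ℂ) v := by
    have := congrArg (starRingEnd ℂ) e2
    simpa [map_sub, map_mul, Complex.conj_I, Complex.conj_ofReal,
      neg_mul, mul_comm, mul_left_comm] using this
  linear_combination (-Complex.I * (starRingEnd ℂ) u) * e1
    + (Complex.I * u) * e1c
    + (-Complex.I * (starRingEnd ℂ) v) * e2
    + (Complex.I * v) * e2c
    + (A * (starRingEnd ℂ) u + u * (starRingEnd ℂ) A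
        + (τ : ℂ) * C * (starRingEnd ℂ) v + (τ : ℂ) * v * (starRingEnd ℂ) C) * Complex.I_sq
end

section
/- Let τ > 0, κ ∈ ℝ, and let q₀, q₁ : ℝ × ℝ → ℂ be twice continuously differentiable functions satisfying the NLSH system pointwise on ℝ × ℝ. Then for all (x,t), ∂ₜ( q₀* ∂ₓq₀ + τ q₁* ∂ₓq₁ ) = ∂ₓ( i q₀* ∂ₓq₁ − i q₁* ∂ₓq₀ + (iκ/2)|q₀|⁴ ), where z* denotes the complex conjugate of z. That is, the density −i(q₀* ∂ₓq₀ + τ q₁* ∂ₓq₁) (whose integral is the modified momentum Ī₂) satisfies a local conservation law. -/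
open Complex

private lemma sliceX {f : ℝ × ℝ → ℂ} (hf : Differentiable ℝ f) (x t : ℝ) :
    HasDerivAt (fun y => f (y, t)) (fderiv ℝ f (x, t) (1, 0)) x := by
  have h := ((hf (x, t)).hasFDerivAt).comp_hasDerivAt x
      ((hasDerivAt_id x).prodMk (hasDerivAt_const x t))
  simpa [Function.comp_def] using h

private lemma sliceT {f : ℝ × ℝ → ℂ} (hf : Differentiable ℝ f) (x t : ℝ) :
    HasDerivAt (fun s => f (x, s)) (fderiv ℝ f (x, t) (0, 1)) t := by
  have h := ((hf (x, t)).hasFDerivAt).comp_hasDerivAt t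
      ((hasDerivAt_const t x).prodMk (hasDerivAt_id t))
  simpa [Function.comp_def] using h

private lemma slice2X {f : ℝ × ℝ → ℂ} (hf : ContDiff ℝ 2 f) (x t : ℝ) (w : ℝ × ℝ) :
    HasDerivAt (fun y => fderiv ℝ f (y, t) w) (fderiv ℝ (fderiv ℝ f) (x, t) (1, 0) w) x := by
  have hF : Differentiable ℝ (fderiv ℝ f) :=
    (hf.fderiv_right (m := 1) (le_refl 2)).differentiable one_ne_zero
  have h1 : HasDerivAt (fun y => fderiv ℝ f (y, t)) (fderiv ℝ (fderiv ℝ f) (x, t) (1, 0)) x := by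
    have := ((hF (x, t)).hasFDerivAt).comp_hasDerivAt x
        ((hasDerivAt_id x).prodMk (hasDerivAt_const x t))
    simpa [Function.comp_def] using this
  have h2 := ((ContinuousLinearMap.apply ℝ ℂ w).hasFDerivAt).comp_hasDerivAt x h1
  simpa [Function.comp_def] using h2

private lemma slice2T {f : ℝ × ℝ → ℂ} (hf : ContDiff ℝ 2 f) (x t : ℝ) (w : ℝ × ℝ) :
    HasDerivAt (fun s => fderiv ℝ f (x, s) w) (fderiv ℝ (fderiv ℝ f) (x, t) (0, 1) w) t := by
  have hF : Differentiable ℝ (fderiv ℝ f) :=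
    (hf.fderiv_right (m := 1) (le_refl 2)).differentiable one_ne_zero
  have h1 : HasDerivAt (fun s => fderiv ℝ f (x, s)) (fderiv ℝ (fderiv ℝ f) (x, t) (0, 1)) t := by
    have := ((hF (x, t)).hasFDerivAt).comp_hasDerivAt t
        ((hasDerivAt_const t x).prodMk (hasDerivAt_id t))
    simpa [Function.comp_def] using this
  have h2 := ((ContinuousLinearMap.apply ℝ ℂ w).hasFDerivAt).comp_hasDerivAt t h1
  simpa [Function.comp_def] using h2

private lemma mixedSymm {f : ℝ × ℝ → ℂ} (hf : ContDiff ℝ 2 f) (x t : ℝ) :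
    fderiv ℝ (fderiv ℝ f) (x, t) (0, 1) (1, 0)
      = fderiv ℝ (fderiv ℝ f) (x, t) (1, 0) (0, 1) :=
  second_derivative_symmetric
    (fun y => ((hf.differentiable (by norm_num)) y).hasFDerivAt)
    (((hf.fderiv_right (m := 1) (le_refl 2)).differentiable one_ne_zero (x, t)).hasFDerivAt) _ _

private lemma HasDerivAt.conjC {g : ℝ → ℂ} {g' : ℂ} {x : ℝ} (hg : HasDerivAt g g' x) :
    HasDerivAt (fun y => (starRingEnd ℂ) (g y)) ((starRingEnd ℂ) g') x := by
  have := (Complex.conjCLE.toContinuousLinearMap.hasFDerivAt (x := g x)).comp_hasDerivAt x hg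
  simpa [Function.comp_def] using this

private lemma abs_sq_eq (z : ℂ) : (((‖z‖ : ℝ) : ℂ)) ^ 2 = z * (starRingEnd ℂ) z := by
  rw [Complex.mul_conj, Complex.normSq_eq_norm_sq]; push_cast; ring

/-- For C² solutions of the NLSH system, the density
q₀* ∂ₓq₀ + τ q₁* ∂ₓq₁ satisfies the local conservation law
∂ₜ(q₀* ∂ₓq₀ + τ q₁* ∂ₓq₁) = ∂ₓ(i q₀* ∂ₓq₁ − i q₁* ∂ₓq₀ + (iκ/2)|q₀|⁴). -/
theorem nlsh_momentum_local_conservation (τ κ : ℝ) (hτ : 0 < τ)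
    (q₀ q₁ : ℝ → ℝ → ℂ)
    (hq₀ : ContDiff ℝ 2 (fun p : ℝ × ℝ => q₀ p.1 p.2))
    (hq₁ : ContDiff ℝ 2 (fun p : ℝ × ℝ => q₁ p.1 p.2))
    (heq₀ : ∀ x t : ℝ,
      Complex.I * deriv (fun s => q₀ x s) t + deriv (fun y => q₁ y t) x
        = -(κ : ℂ) * (((‖q₀ x t‖ : ℝ) : ℂ)) ^ 2 * q₀ x t)
    (heq₁ : ∀ x t : ℝ,
      Complex.I * (τ : ℂ) * deriv (fun s => q₁ x s) t
        = deriv (fun y => q₀ y t) x - q₁ x t) :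
    ∀ x t : ℝ,
      deriv (fun s => (starRingEnd ℂ) (q₀ x s) * deriv (fun y => q₀ y s) x
          + (τ : ℂ) * (starRingEnd ℂ) (q₁ x s) * deriv (fun y => q₁ y s) x) t
      = deriv (fun y =>
          Complex.I * (starRingEnd ℂ) (q₀ y t) * deriv (fun z => q₁ z t) y
          - Complex.I * (starRingEnd ℂ) (q₁ y t) * deriv (fun z => q₀ z t) y
          + (Complex.I * (κ : ℂ) / 2) * (((‖q₀ y t‖ : ℝ) : ℂ)) ^ 4) x := by
  intro x t
  have hdu : Differentiable ℝ (fun p : ℝ × ℝ => q₀ p.1 p.2) := hq₀.differentiable (by norm_num)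
  have hdv : Differentiable ℝ (fun p : ℝ × ℝ => q₁ p.1 p.2) := hq₁.differentiable (by norm_num)
  set Fu := fderiv ℝ (fun p : ℝ × ℝ => q₀ p.1 p.2) with hFudef
  set Fv := fderiv ℝ (fun p : ℝ × ℝ => q₁ p.1 p.2) with hFvdef
  set F2u := fderiv ℝ Fu with hF2udef
  set F2v := fderiv ℝ Fv with hF2vdef
  -- first order slice derivatives
  have hux' : ∀ y s, deriv (fun z => q₀ z s) y = Fu (y, s) (1, 0) :=
    fun y s => (sliceX hdu y s).deriv
  have hvx' : ∀ y s, deriv (fun z => q₁ z s) y = Fv (y, s) (1, 0) :=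
    fun y s => (sliceX hdv y s).deriv
  have hut' : ∀ y s, deriv (fun r => q₀ y r) s = Fu (y, s) (0, 1) :=
    fun y s => (sliceT hdu y s).deriv
  have hvt' : ∀ y s, deriv (fun r => q₁ y r) s = Fv (y, s) (0, 1) :=
    fun y s => (sliceT hdv y s).deriv
  -- PDE in fderiv form
  have E0 : ∀ y s, Complex.I * Fu (y, s) (0, 1) + Fv (y, s) (1, 0)
      = -(κ : ℂ) * (q₀ y s * (starRingEnd ℂ) (q₀ y s)) * q₀ y s := by
    intro y s
    have h := heq₀ y s
    rw [hut' y s, hvx' y s, abs_sq_eq] at h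
    exact h
  have E1 : ∀ y s, Complex.I * (τ : ℂ) * Fv (y, s) (0, 1)
      = Fu (y, s) (1, 0) - q₁ y s := by
    intro y s
    have h := heq₁ y s
    rw [hvt' y s, hux' y s] at h
    exact h
  -- point derivatives in x
  have hq0x : HasDerivAt (fun y => q₀ y t) (Fu (x, t) (1, 0)) x := sliceX hdu x t
  have hq0xc : HasDerivAt (fun y => (starRingEnd ℂ) (q₀ y t))
      ((starRingEnd ℂ) (Fu (x, t) (1, 0))) x := hq0x.conjC
  have hq1x : HasDerivAt (fun y => q₁ y t) (Fv (x, t) (1, 0)) x := sliceX hdv x t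
  have hq1xc : HasDerivAt (fun y => (starRingEnd ℂ) (q₁ y t))
      ((starRingEnd ℂ) (Fv (x, t) (1, 0))) x := hq1x.conjC
  have huxx : HasDerivAt (fun y => Fu (y, t) (1, 0)) (F2u (x, t) (1, 0) (1, 0)) x :=
    slice2X hq₀ x t (1, 0)
  have hvxx : HasDerivAt (fun y => Fv (y, t) (1, 0)) (F2v (x, t) (1, 0) (1, 0)) x :=
    slice2X hq₁ x t (1, 0)
  -- mixed partial for q₀ via the PDE
  have hUtfun : (fun y => Fu (y, t) (0, 1))
      = (fun y => Complex.I * ((κ : ℂ) * (q₀ y t * (starRingEnd ℂ) (q₀ y t)) * q₀ y t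
          + Fv (y, t) (1, 0))) := by
    funext y
    linear_combination (-Complex.I) * E0 y t + Fu (y, t) (0, 1) * Complex.I_sq
  have hMu : F2u (x, t) (1, 0) (0, 1)
      = Complex.I * (((κ : ℂ) * (Fu (x, t) (1, 0) * (starRingEnd ℂ) (q₀ x t)
            + q₀ x t * (starRingEnd ℂ) (Fu (x, t) (1, 0)))) * q₀ x t
          + (κ : ℂ) * (q₀ x t * (starRingEnd ℂ) (q₀ x t)) * Fu (x, t) (1, 0)
          + F2v (x, t) (1, 0) (1, 0)) := by
    have h1 : HasDerivAt (fun y => Complex.I * ((κ : ℂ) * (q₀ y t * (starRingEnd ℂ) (q₀ y t)) * q₀ y t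
        + Fv (y, t) (1, 0)))
        (Complex.I * (((κ : ℂ) * (Fu (x, t) (1, 0) * (starRingEnd ℂ) (q₀ x t)
            + q₀ x t * (starRingEnd ℂ) (Fu (x, t) (1, 0)))) * q₀ x t
          + (κ : ℂ) * (q₀ x t * (starRingEnd ℂ) (q₀ x t)) * Fu (x, t) (1, 0)
          + F2v (x, t) (1, 0) (1, 0))) x :=
      ((((hq0x.mul hq0xc).const_mul ((κ : ℂ))).mul hq0x).add hvxx).const_mul Complex.I
    have h2 : HasDerivAt (fun y => Fu (y, t) (0, 1))
        (Complex.I * (((κ : ℂ) * (Fu (x, t) (1, 0) * (starRingEnd ℂ) (q₀ x t)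
            + q₀ x t * (starRingEnd ℂ) (Fu (x, t) (1, 0)))) * q₀ x t
          + (κ : ℂ) * (q₀ x t * (starRingEnd ℂ) (q₀ x t)) * Fu (x, t) (1, 0)
          + F2v (x, t) (1, 0) (1, 0))) x := by
      rw [hUtfun]; exact h1
    exact (slice2X hq₀ x t (0, 1)).unique h2
  -- mixed partial for q₁ via the PDE
  have hVtfun : (fun y => Complex.I * (τ : ℂ) * Fv (y, t) (0, 1))
      = (fun y => Fu (y, t) (1, 0) - q₁ y t) := by
    funext y; exact E1 y t
  have hMv : Complex.I * (τ : ℂ) * F2v (x, t) (1, 0) (0, 1)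
      = F2u (x, t) (1, 0) (1, 0) - Fv (x, t) (1, 0) := by
    have h1 : HasDerivAt (fun y => Complex.I * (τ : ℂ) * Fv (y, t) (0, 1))
        (F2u (x, t) (1, 0) (1, 0) - Fv (x, t) (1, 0)) x := by
      rw [hVtfun]; exact huxx.sub hq1x
    have h2 := (slice2X hq₁ x t (0, 1)).const_mul (Complex.I * (τ : ℂ))
    exact h2.unique h1
  -- conjugated PDE relations
  have hcut : (starRingEnd ℂ) (Fu (x, t) (0, 1))
      = -Complex.I * ((κ : ℂ) * (q₀ x t * (starRingEnd ℂ) (q₀ x t)) * (starRingEnd ℂ) (q₀ x t)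
          + (starRingEnd ℂ) (Fv (x, t) (1, 0))) := by
    have h := congrArg (starRingEnd ℂ) (E0 x t)
    simp only [map_add, map_mul, map_neg, Complex.conj_conj, Complex.conj_I,
      Complex.conj_ofReal] at h
    linear_combination Complex.I * h
      + (starRingEnd ℂ) (Fu (x, t) (0, 1)) * Complex.I_sq
  have hcvt : (τ : ℂ) * (starRingEnd ℂ) (Fv (x, t) (0, 1))
      = Complex.I * ((starRingEnd ℂ) (Fu (x, t) (1, 0)) - (starRingEnd ℂ) (q₁ x t)) := by
    have h := congrArg (starRingEnd ℂ) (E1 x t)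
    simp only [map_sub, map_mul, Complex.conj_conj, Complex.conj_I, Complex.conj_ofReal] at h
    linear_combination Complex.I * h
      + (τ : ℂ) * (starRingEnd ℂ) (Fv (x, t) (0, 1)) * Complex.I_sq
  -- left-hand side
  have hLfun : (fun s => (starRingEnd ℂ) (q₀ x s) * deriv (fun y => q₀ y s) x
        + (τ : ℂ) * (starRingEnd ℂ) (q₁ x s) * deriv (fun y => q₁ y s) x)
      = (fun s => (starRingEnd ℂ) (q₀ x s) * Fu (x, s) (1, 0)
        + (τ : ℂ) * (starRingEnd ℂ) (q₁ x s) * Fv (x, s) (1, 0)) := by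
    funext s; rw [hux' x s, hvx' x s]
  have hq0t : HasDerivAt (fun s => q₀ x s) (Fu (x, t) (0, 1)) t := sliceT hdu x t
  have hq0tc : HasDerivAt (fun s => (starRingEnd ℂ) (q₀ x s))
      ((starRingEnd ℂ) (Fu (x, t) (0, 1))) t := hq0t.conjC
  have hq1t : HasDerivAt (fun s => q₁ x s) (Fv (x, t) (0, 1)) t := sliceT hdv x t
  have hq1tc : HasDerivAt (fun s => (starRingEnd ℂ) (q₁ x s))
      ((starRingEnd ℂ) (Fv (x, t) (0, 1))) t := hq1t.conjC
  have hFuT : HasDerivAt (fun s => Fu (x, s) (1, 0)) (F2u (x, t) (0, 1) (1, 0)) t :=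
    slice2T hq₀ x t (1, 0)
  have hFvT : HasDerivAt (fun s => Fv (x, s) (1, 0)) (F2v (x, t) (0, 1) (1, 0)) t :=
    slice2T hq₁ x t (1, 0)
  have hL : HasDerivAt (fun s => (starRingEnd ℂ) (q₀ x s) * Fu (x, s) (1, 0)
        + (τ : ℂ) * (starRingEnd ℂ) (q₁ x s) * Fv (x, s) (1, 0))
      ((starRingEnd ℂ) (Fu (x, t) (0, 1)) * Fu (x, t) (1, 0)
        + (starRingEnd ℂ) (q₀ x t) * F2u (x, t) (0, 1) (1, 0)
        + ((τ : ℂ) * (starRingEnd ℂ) (Fv (x, t) (0, 1)) * Fv (x, t) (1, 0)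
          + (τ : ℂ) * (starRingEnd ℂ) (q₁ x t) * F2v (x, t) (0, 1) (1, 0))) t :=
    (hq0tc.mul hFuT).add ((hq1tc.const_mul ((τ : ℂ))).mul hFvT)
  -- right-hand side
  have hRfun : (fun y => Complex.I * (starRingEnd ℂ) (q₀ y t) * deriv (fun z => q₁ z t) y
        - Complex.I * (starRingEnd ℂ) (q₁ y t) * deriv (fun z => q₀ z t) y
        + (Complex.I * (κ : ℂ) / 2) * (((‖q₀ y t‖ : ℝ) : ℂ)) ^ 4)
      = (fun y => Complex.I * (starRingEnd ℂ) (q₀ y t) * Fv (y, t) (1, 0)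
        - Complex.I * (starRingEnd ℂ) (q₁ y t) * Fu (y, t) (1, 0)
        + (Complex.I * (κ : ℂ) / 2) * ((q₀ y t * (starRingEnd ℂ) (q₀ y t)) * (q₀ y t * (starRingEnd ℂ) (q₀ y t)))) := by
    funext y
    rw [hux' y t, hvx' y t]
    have h4 : (((‖q₀ y t‖ : ℝ) : ℂ)) ^ 4
        = (((‖q₀ y t‖ : ℝ) : ℂ)) ^ 2 * (((‖q₀ y t‖ : ℝ) : ℂ)) ^ 2 := by ring
    rw [h4, abs_sq_eq]
  have hR : HasDerivAt (fun y => Complex.I * (starRingEnd ℂ) (q₀ y t) * Fv (y, t) (1, 0)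
        - Complex.I * (starRingEnd ℂ) (q₁ y t) * Fu (y, t) (1, 0)
        + (Complex.I * (κ : ℂ) / 2) * ((q₀ y t * (starRingEnd ℂ) (q₀ y t)) * (q₀ y t * (starRingEnd ℂ) (q₀ y t))))
      ((Complex.I * (starRingEnd ℂ) (Fu (x, t) (1, 0)) * Fv (x, t) (1, 0)
          + Complex.I * (starRingEnd ℂ) (q₀ x t) * F2v (x, t) (1, 0) (1, 0)
        - (Complex.I * (starRingEnd ℂ) (Fv (x, t) (1, 0)) * Fu (x, t) (1, 0)
          + Complex.I * (starRingEnd ℂ) (q₁ x t) * F2u (x, t) (1, 0) (1, 0)))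
        + (Complex.I * (κ : ℂ) / 2) * ((Fu (x, t) (1, 0) * (starRingEnd ℂ) (q₀ x t)
              + q₀ x t * (starRingEnd ℂ) (Fu (x, t) (1, 0))) * (q₀ x t * (starRingEnd ℂ) (q₀ x t))
            + (q₀ x t * (starRingEnd ℂ) (q₀ x t)) * (Fu (x, t) (1, 0) * (starRingEnd ℂ) (q₀ x t)
              + q₀ x t * (starRingEnd ℂ) (Fu (x, t) (1, 0))))) x := by
    have hA := (hq0xc.const_mul Complex.I).mul hvxx
    have hB := (hq1xc.const_mul Complex.I).mul huxx
    have hC := ((hq0x.mul hq0xc).mul (hq0x.mul hq0xc)).const_mul (Complex.I * (κ : ℂ) / 2)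
    have := (hA.sub hB).add hC
    convert this using 1
    all_goals rfl
  have hsymmU : F2u (x, t) (0, 1) (1, 0) = F2u (x, t) (1, 0) (0, 1) := mixedSymm hq₀ x t
  have hsymmV : F2v (x, t) (0, 1) (1, 0) = F2v (x, t) (1, 0) (0, 1) := mixedSymm hq₁ x t
  rw [hLfun, hRfun, hL.deriv, hR.deriv, hsymmU, hsymmV]
  linear_combination Fu (x, t) (1, 0) * hcut + (starRingEnd ℂ) (q₀ x t) * hMu
    + Fv (x, t) (1, 0) * hcvt
    + (-Complex.I * (starRingEnd ℂ) (q₁ x t)) * hMv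
    + (τ : ℂ) * (starRingEnd ℂ) (q₁ x t) * F2v (x, t) (1, 0) (0, 1) * Complex.I_sq
end

section
/- Let τ > 0 and κ ∈ ℝ, and let q₀, q₁ : ℝ × ℝ → ℂ be twice continuously differentiable functions satisfying the NLSH system pointwise, such that there is a compact set K ⊂ ℝ with q₀(x,t) = q₁(x,t) = 0 for all x ∉ K and all t. Then the modified Hamiltonian t ↦ H̄(t) = ∫_ℝ ( q₁*(x,t) ∂ₓq₀(x,t) + q₁(x,t) ∂ₓq₀*(x,t) − |q₁(x,t)|² − (κ/2)|q₀(x,t)|⁴ ) dx is constant in t. -/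
open MeasureTheory Set

noncomputable section NLSHAux

namespace NLSHAux

def pdx (f : ℝ × ℝ → ℂ) (p : ℝ × ℝ) : ℂ := fderiv ℝ f p (1, 0)
def pdt (f : ℝ × ℝ → ℂ) (p : ℝ × ℝ) : ℂ := fderiv ℝ f p (0, 1)

lemma hasDerivAt_pdx {f : ℝ × ℝ → ℂ} {x t : ℝ} (hf : DifferentiableAt ℝ f (x, t)) :
    HasDerivAt (fun y => f (y, t)) (pdx f (x, t)) x := by
  have h : HasDerivAt (fun y : ℝ => ((y, t) : ℝ × ℝ)) ((1 : ℝ), (0 : ℝ)) x :=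
    (hasDerivAt_id x).prodMk (hasDerivAt_const x t)
  exact hf.hasFDerivAt.comp_hasDerivAt x h

lemma hasDerivAt_pdt {f : ℝ × ℝ → ℂ} {x t : ℝ} (hf : DifferentiableAt ℝ f (x, t)) :
    HasDerivAt (fun s => f (x, s)) (pdt f (x, t)) t := by
  have h : HasDerivAt (fun s : ℝ => ((x, s) : ℝ × ℝ)) ((0 : ℝ), (1 : ℝ)) t :=
    (hasDerivAt_const t x).prodMk (hasDerivAt_id t)
  exact hf.hasFDerivAt.comp_hasDerivAt t h

lemma contDiff_pdx {f : ℝ × ℝ → ℂ} (hf : ContDiff ℝ 2 f) : ContDiff ℝ 1 (pdx f) :=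
  (ContinuousLinearMap.apply ℝ ℂ ((1 : ℝ), (0 : ℝ))).contDiff.comp
    (hf.fderiv_right (m := 1) (by norm_num))

lemma contDiff_pdt {f : ℝ × ℝ → ℂ} (hf : ContDiff ℝ 2 f) : ContDiff ℝ 1 (pdt f) :=
  (ContinuousLinearMap.apply ℝ ℂ ((0 : ℝ), (1 : ℝ))).contDiff.comp
    (hf.fderiv_right (m := 1) (by norm_num))

lemma continuous_pdx {f : ℝ × ℝ → ℂ} (hf : ContDiff ℝ 1 f) : Continuous (pdx f) :=
  (((ContinuousLinearMap.apply ℝ ℂ ((1 : ℝ), (0 : ℝ))).contDiff (n := 0)).comp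
    (hf.fderiv_right (m := 0) (by norm_num))).continuous

lemma continuous_pdt {f : ℝ × ℝ → ℂ} (hf : ContDiff ℝ 1 f) : Continuous (pdt f) :=
  (((ContinuousLinearMap.apply ℝ ℂ ((0 : ℝ), (1 : ℝ))).contDiff (n := 0)).comp
    (hf.fderiv_right (m := 0) (by norm_num))).continuous

lemma pdt_pdx {f : ℝ × ℝ → ℂ} (hf : ContDiff ℝ 2 f) (p : ℝ × ℝ) :
    pdt (pdx f) p = pdx (pdt f) p := by
  have hsymm : IsSymmSndFDerivAt ℝ f p :=
    (hf.contDiffAt).isSymmSndFDerivAt (by simp)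
  have hd : DifferentiableAt ℝ (fderiv ℝ f) p :=
    ((hf.fderiv_right (m := 1) (by norm_num)).differentiable one_ne_zero).differentiableAt
  have h1 : pdt (pdx f) p = fderiv ℝ (fderiv ℝ f) p (0, 1) (1, 0) := by
    show fderiv ℝ (fun q => fderiv ℝ f q (1, 0)) p (0, 1) = _
    rw [fderiv_clm_apply hd (differentiableAt_const _)]
    simp
  have h2 : pdx (pdt f) p = fderiv ℝ (fderiv ℝ f) p (1, 0) (0, 1) := by
    show fderiv ℝ (fun q => fderiv ℝ f q (0, 1)) p (1, 0) = _
    rw [fderiv_clm_apply hd (differentiableAt_const _)]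
    simp
  rw [h1, h2, hsymm ((0 : ℝ), (1 : ℝ)) ((1 : ℝ), (0 : ℝ))]

lemma _root_.HasDerivAt.conjC_s3 {f : ℝ → ℂ} {f' : ℂ} {x : ℝ} (h : HasDerivAt f f' x) :
    HasDerivAt (fun y => (starRingEnd ℂ) (f y)) ((starRingEnd ℂ) f') x := by
  exact h.star

lemma _root_.Continuous.conjC_s3 {f : ℝ × ℝ → ℂ} (h : Continuous f) :
    Continuous (fun p => (starRingEnd ℂ) (f p)) := by
  exact h.star

/-- the Hamiltonian density -/
def Fh (κ : ℝ) (f₀ f₁ : ℝ × ℝ → ℂ) (p : ℝ × ℝ) : ℂ :=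
  (starRingEnd ℂ) (f₁ p) * pdx f₀ p + f₁ p * (starRingEnd ℂ) (pdx f₀ p)
    - (starRingEnd ℂ) (f₁ p) * f₁ p
    - ((κ : ℂ) / 2) * (((starRingEnd ℂ) (f₀ p) * f₀ p) * ((starRingEnd ℂ) (f₀ p) * f₀ p))

/-- the flux -/
def Gh (κ : ℝ) (f₀ f₁ : ℝ × ℝ → ℂ) (p : ℝ × ℝ) : ℂ :=
  Complex.I * ((starRingEnd ℂ) (f₁ p) * pdx f₁ p - f₁ p * (starRingEnd ℂ) (pdx f₁ p))
    + (Complex.I * (κ : ℂ)) * (((starRingEnd ℂ) (f₀ p) * f₀ p) *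
        ((starRingEnd ℂ) (f₁ p) * f₀ p - f₁ p * (starRingEnd ℂ) (f₀ p)))

/-- time derivative of the Hamiltonian density -/
def Th (κ : ℝ) (f₀ f₁ : ℝ × ℝ → ℂ) (p : ℝ × ℝ) : ℂ :=
  ((starRingEnd ℂ) (pdt f₁ p) * pdx f₀ p + (starRingEnd ℂ) (f₁ p) * pdt (pdx f₀) p
    + (pdt f₁ p * (starRingEnd ℂ) (pdx f₀ p) + f₁ p * (starRingEnd ℂ) (pdt (pdx f₀) p))
    - ((starRingEnd ℂ) (pdt f₁ p) * f₁ p + (starRingEnd ℂ) (f₁ p) * pdt f₁ p))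
    - ((κ : ℂ) / 2) * ((((starRingEnd ℂ) (pdt f₀ p) * f₀ p
            + (starRingEnd ℂ) (f₀ p) * pdt f₀ p) * ((starRingEnd ℂ) (f₀ p) * f₀ p)
        + ((starRingEnd ℂ) (f₀ p) * f₀ p)
          * ((starRingEnd ℂ) (pdt f₀ p) * f₀ p + (starRingEnd ℂ) (f₀ p) * pdt f₀ p)))

/-- space derivative of the flux -/
def Dh (κ : ℝ) (f₀ f₁ : ℝ × ℝ → ℂ) (p : ℝ × ℝ) : ℂ :=
  Complex.I * (((starRingEnd ℂ) (pdx f₁ p) * pdx f₁ p + (starRingEnd ℂ) (f₁ p) * pdx (pdx f₁) p)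
      - (pdx f₁ p * (starRingEnd ℂ) (pdx f₁ p) + f₁ p * (starRingEnd ℂ) (pdx (pdx f₁) p)))
    + (Complex.I * (κ : ℂ)) *
      ((((starRingEnd ℂ) (pdx f₀ p) * f₀ p + (starRingEnd ℂ) (f₀ p) * pdx f₀ p)
          * ((starRingEnd ℂ) (f₁ p) * f₀ p - f₁ p * (starRingEnd ℂ) (f₀ p)))
        + ((starRingEnd ℂ) (f₀ p) * f₀ p)
          * (((starRingEnd ℂ) (pdx f₁ p) * f₀ p + (starRingEnd ℂ) (f₁ p) * pdx f₀ p)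
            - (pdx f₁ p * (starRingEnd ℂ) (f₀ p) + f₁ p * (starRingEnd ℂ) (pdx f₀ p))))

theorem main_aux (τ κ : ℝ) (hτ : 0 < τ) (f₀ f₁ : ℝ × ℝ → ℂ)
    (hf₀ : ContDiff ℝ 2 f₀) (hf₁ : ContDiff ℝ 2 f₁)
    (e0 : ∀ p : ℝ × ℝ, Complex.I * pdt f₀ p + pdx f₁ p
        = -(κ : ℂ) * ((starRingEnd ℂ) (f₀ p) * f₀ p) * f₀ p)
    (e1 : ∀ p : ℝ × ℝ, Complex.I * (τ : ℂ) * pdt f₁ p = pdx f₀ p - f₁ p)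
    (K : Set ℝ) (hK : IsCompact K)
    (hsupp : ∀ x ∉ K, ∀ t : ℝ, f₀ (x, t) = 0 ∧ f₁ (x, t) = 0) :
    ∀ t₁ t₂ : ℝ, (∫ x : ℝ, Fh κ f₀ f₁ (x, t₁)) = ∫ x : ℝ, Fh κ f₀ f₁ (x, t₂) := by
  -- basic differentiability
  have hd₀ : ∀ p : ℝ × ℝ, DifferentiableAt ℝ f₀ p :=
    fun p => (hf₀.differentiable two_ne_zero).differentiableAt
  have hd₁ : ∀ p : ℝ × ℝ, DifferentiableAt ℝ f₁ p :=
    fun p => (hf₁.differentiable two_ne_zero).differentiableAt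
  have hdx₀ : ∀ p : ℝ × ℝ, DifferentiableAt ℝ (pdx f₀) p :=
    fun p => ((contDiff_pdx hf₀).differentiable one_ne_zero).differentiableAt
  have hdx₁ : ∀ p : ℝ × ℝ, DifferentiableAt ℝ (pdx f₁) p :=
    fun p => ((contDiff_pdx hf₁).differentiable one_ne_zero).differentiableAt
  have hdt₀ : ∀ p : ℝ × ℝ, DifferentiableAt ℝ (pdt f₀) p :=
    fun p => ((contDiff_pdt hf₀).differentiable one_ne_zero).differentiableAt
  -- conjugated equations
  have e0c : ∀ p : ℝ × ℝ, -Complex.I * (starRingEnd ℂ) (pdt f₀ p) + (starRingEnd ℂ) (pdx f₁ p)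
      = -(κ : ℂ) * (f₀ p * (starRingEnd ℂ) (f₀ p)) * (starRingEnd ℂ) (f₀ p) := by
    intro p
    have h := congrArg (starRingEnd ℂ) (e0 p)
    simp only [map_add, map_mul, map_neg, Complex.conj_I, Complex.conj_ofReal,
      Complex.conj_conj] at h
    linear_combination h
  have e1c : ∀ p : ℝ × ℝ, -Complex.I * (τ : ℂ) * (starRingEnd ℂ) (pdt f₁ p)
      = (starRingEnd ℂ) (pdx f₀ p) - (starRingEnd ℂ) (f₁ p) := by
    intro p
    have h := congrArg (starRingEnd ℂ) (e1 p)
    simp only [map_mul, map_sub, Complex.conj_I, Complex.conj_ofReal] at h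
    linear_combination h
  -- solve for the time derivatives of f₀
  have sAt : ∀ p : ℝ × ℝ, pdt f₀ p = Complex.I * pdx f₁ p
      + Complex.I * (κ : ℂ) * ((starRingEnd ℂ) (f₀ p) * f₀ p * f₀ p) := by
    intro p
    linear_combination (-Complex.I) * e0 p + pdt f₀ p * Complex.I_sq
  have sAtc : ∀ p : ℝ × ℝ, (starRingEnd ℂ) (pdt f₀ p)
      = -Complex.I * (starRingEnd ℂ) (pdx f₁ p)
        - Complex.I * (κ : ℂ) * (f₀ p * (starRingEnd ℂ) (f₀ p) * (starRingEnd ℂ) (f₀ p)) := by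
    intro p
    linear_combination Complex.I * e0c p + (starRingEnd ℂ) (pdt f₀ p) * Complex.I_sq
  -- the mixed partial derivative of f₀
  have hAtx : ∀ x t : ℝ, pdt (pdx f₀) (x, t) = Complex.I * pdx (pdx f₁) (x, t)
      + Complex.I * (κ : ℂ) * (((starRingEnd ℂ) (pdx f₀ (x, t)) * f₀ (x, t)
          + (starRingEnd ℂ) (f₀ (x, t)) * pdx f₀ (x, t)) * f₀ (x, t)
        + ((starRingEnd ℂ) (f₀ (x, t)) * f₀ (x, t)) * pdx f₀ (x, t)) := by
    intro x t
    have h1 : HasDerivAt (fun y => pdt f₀ (y, t)) (pdx (pdt f₀) (x, t)) x :=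
      hasDerivAt_pdx (hdt₀ (x, t))
    have h2 := ((hasDerivAt_pdx (hdx₁ (x, t))).const_mul Complex.I).add
      (((((hasDerivAt_pdx (hd₀ (x, t))).conjC_s3.mul (hasDerivAt_pdx (hd₀ (x, t)))).mul
          (hasDerivAt_pdx (hd₀ (x, t))))).const_mul (Complex.I * (κ : ℂ)))
    have h3 := h2.congr_of_eventuallyEq
      (Filter.Eventually.of_forall fun y => sAt (y, t))
    have h4 := h1.unique h3
    simp only [Pi.mul_apply] at h4
    linear_combination pdt_pdx hf₀ (x, t) + h4
  have hAtxc : ∀ x t : ℝ, (starRingEnd ℂ) (pdt (pdx f₀) (x, t))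
      = -Complex.I * (starRingEnd ℂ) (pdx (pdx f₁) (x, t))
        - Complex.I * (κ : ℂ) * ((pdx f₀ (x, t) * (starRingEnd ℂ) (f₀ (x, t))
            + f₀ (x, t) * (starRingEnd ℂ) (pdx f₀ (x, t))) * (starRingEnd ℂ) (f₀ (x, t))
          + (f₀ (x, t) * (starRingEnd ℂ) (f₀ (x, t))) * (starRingEnd ℂ) (pdx f₀ (x, t))) := by
    intro x t
    have h := congrArg (starRingEnd ℂ) (hAtx x t)
    simp only [map_add, map_mul, Complex.conj_I, Complex.conj_ofReal, Complex.conj_conj] at h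
    linear_combination h
  -- pointwise derivative of the density in time
  have hFt : ∀ x t : ℝ, HasDerivAt (fun s => Fh κ f₀ f₁ (x, s)) (Th κ f₀ f₁ (x, t)) t := by
    intro x t
    have hB := hasDerivAt_pdt (hd₁ (x, t))
    have hA := hasDerivAt_pdt (hd₀ (x, t))
    have hAx := hasDerivAt_pdt (hdx₀ (x, t))
    exact (((hB.conjC_s3.mul hAx).add (hB.mul hAx.conjC_s3)).sub (hB.conjC_s3.mul hB)).sub
      (((hA.conjC_s3.mul hA).mul (hA.conjC_s3.mul hA)).const_mul ((κ : ℂ) / 2))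
  -- pointwise derivative of the flux in space
  have hGx : ∀ x t : ℝ, HasDerivAt (fun y => Gh κ f₀ f₁ (y, t)) (Dh κ f₀ f₁ (x, t)) x := by
    intro x t
    have hA := hasDerivAt_pdx (hd₀ (x, t))
    have hB := hasDerivAt_pdx (hd₁ (x, t))
    have hBx := hasDerivAt_pdx (hdx₁ (x, t))
    exact (((hB.conjC_s3.mul hBx).sub (hB.mul hBx.conjC_s3)).const_mul Complex.I).add
      (((hA.conjC_s3.mul hA).mul ((hB.conjC_s3.mul hA).sub (hB.mul hA.conjC_s3))).const_mul
        (Complex.I * (κ : ℂ)))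
  -- the key algebraic identity
  have key : ∀ x t : ℝ, Th κ f₀ f₁ (x, t) = Dh κ f₀ f₁ (x, t) := by
    intro x t
    unfold Th Dh
    rw [hAtxc x t, hAtx x t, sAtc (x, t), sAt (x, t)]
    linear_combination (-(starRingEnd ℂ (pdt f₁ (x, t)))) * e1 (x, t)
      + (-(pdt f₁ (x, t))) * e1c (x, t)
  -- continuity facts
  have c0 := hf₀.continuous
  have c1 := hf₁.continuous
  have cx0 := continuous_pdx (hf₀.of_le one_le_two)
  have cx1 := continuous_pdx (hf₁.of_le one_le_two)
  have cxx1 := continuous_pdx (contDiff_pdx hf₁)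
  have ct0 := continuous_pdt (hf₀.of_le one_le_two)
  have ct1 := continuous_pdt (hf₁.of_le one_le_two)
  have ctx0 := continuous_pdt (contDiff_pdx hf₀)
  have contF : Continuous (Fh κ f₀ f₁) := by
    unfold Fh
    exact (((c1.conjC_s3.mul cx0).add (c1.mul cx0.conjC_s3)).sub (c1.conjC_s3.mul c1)).sub
      (continuous_const.mul (((c0.conjC_s3.mul c0).mul (c0.conjC_s3.mul c0))))
  have contT : Continuous (Th κ f₀ f₁) := by
    unfold Th
    exact ((((ct1.conjC_s3.mul cx0).add (c1.conjC_s3.mul ctx0)).add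
        ((ct1.mul cx0.conjC_s3).add (c1.mul ctx0.conjC_s3))).sub
        ((ct1.conjC_s3.mul c1).add (c1.conjC_s3.mul ct1))).sub
      (continuous_const.mul ((((ct0.conjC_s3.mul c0).add (c0.conjC_s3.mul ct0)).mul
          (c0.conjC_s3.mul c0)).add
        ((c0.conjC_s3.mul c0).mul ((ct0.conjC_s3.mul c0).add (c0.conjC_s3.mul ct0)))))
  have contD : Continuous (Dh κ f₀ f₁) := by
    unfold Dh
    exact (continuous_const.mul (((cx1.conjC_s3.mul cx1).add (c1.conjC_s3.mul cxx1)).sub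
        ((cx1.mul cx1.conjC_s3).add (c1.mul cxx1.conjC_s3)))).add
      (continuous_const.mul ((((cx0.conjC_s3.mul c0).add (c0.conjC_s3.mul cx0)).mul
          ((c1.conjC_s3.mul c0).sub (c1.mul c0.conjC_s3))).add
        ((c0.conjC_s3.mul c0).mul (((cx1.conjC_s3.mul c0).add (c1.conjC_s3.mul cx0)).sub
          ((cx1.mul c0.conjC_s3).add (c1.mul cx0.conjC_s3))))))
  -- vanishing outside K
  have hzero : ∀ x ∉ K, ∀ t : ℝ, f₀ (x, t) = 0 ∧ f₁ (x, t) = 0 ∧ pdx f₀ (x, t) = 0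
      ∧ pdx f₁ (x, t) = 0 := by
    intro x hx t
    have hop : Kᶜ ∈ nhds x := hK.isClosed.isOpen_compl.mem_nhds hx
    have hev0 : (fun y => f₀ (y, t)) =ᶠ[nhds x] fun _ => (0 : ℂ) :=
      Filter.eventually_of_mem hop fun y hy => (hsupp y hy t).1
    have hev1 : (fun y => f₁ (y, t)) =ᶠ[nhds x] fun _ => (0 : ℂ) :=
      Filter.eventually_of_mem hop fun y hy => (hsupp y hy t).2
    refine ⟨(hsupp x hx t).1, (hsupp x hx t).2, ?_, ?_⟩
    · rw [← (hasDerivAt_pdx (hd₀ (x, t))).deriv, hev0.deriv_eq, deriv_const]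
    · rw [← (hasDerivAt_pdx (hd₁ (x, t))).deriv, hev1.deriv_eq, deriv_const]
  have hFz : ∀ t : ℝ, ∀ x ∉ K, Fh κ f₀ f₁ (x, t) = 0 := by
    intro t x hx
    obtain ⟨h0, h1, h2, h3⟩ := hzero x hx t
    unfold Fh
    rw [h0, h1, h2]
    simp
  have hGz : ∀ t : ℝ, ∀ x ∉ K, Gh κ f₀ f₁ (x, t) = 0 := by
    intro t x hx
    obtain ⟨h0, h1, h2, h3⟩ := hzero x hx t
    unfold Gh
    rw [h0, h1, h3]
    simp
  -- choose an interval containing K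
  obtain ⟨r, hr⟩ := hK.isBounded.subset_closedBall 0
  set a : ℝ := -(|r| + 1) with ha
  set b : ℝ := |r| + 1 with hb
  have habs : ∀ x ∈ K, |x| ≤ |r| := by
    intro x hx
    have h : |x| ≤ r := by simpa [Real.dist_eq] using hr hx
    exact h.trans (le_abs_self r)
  have hab : a ≤ b := by
    have := abs_nonneg r
    simp only [ha, hb]
    linarith
  have hKsub : K ⊆ Ioc a b := by
    intro x hx
    have h := habs x hx
    rw [abs_le] at h
    constructor <;> simp [ha, hb] <;> linarith [h.1, h.2]
  have haK : a ∉ K := by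
    intro h
    have := habs a h
    rw [abs_le] at this
    simp [ha] at this
    linarith [this.2]
  have hbK : b ∉ K := by
    intro h
    have := habs b h
    rw [abs_le] at this
    simp [hb] at this
    linarith
  -- integral over ℝ reduces to the interval
  have hIeq : ∀ t : ℝ, (∫ x : ℝ, Fh κ f₀ f₁ (x, t)) = ∫ x in a..b, Fh κ f₀ f₁ (x, t) := by
    intro t
    refine (intervalIntegral.integral_eq_integral_of_support_subset ?_).symm
    intro x hx
    rw [Function.mem_support] at hx
    by_contra hmem
    exact hx (hFz t x fun hK' => hmem (hKsub hK'))
  -- the interval integral has zero derivative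
  have hderiv : ∀ t₀ : ℝ, HasDerivAt (fun t => ∫ x in a..b, Fh κ f₀ f₁ (x, t)) 0 t₀ := by
    intro t₀
    obtain ⟨C, hC⟩ := (isCompact_Icc.prod (isCompact_Icc (a := t₀ - 1)
      (b := t₀ + 1))).exists_bound_of_continuousOn contT.continuousOn
    have hIob : uIoc a b ⊆ Icc a b := by
      rw [uIoc_of_le hab]; exact Ioc_subset_Icc_self
    have hmain := intervalIntegral.hasDerivAt_integral_of_dominated_loc_of_deriv_le
      (F := fun t x => Fh κ f₀ f₁ (x, t)) (F' := fun t x => Th κ f₀ f₁ (x, t))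
      (x₀ := t₀) (a := a) (b := b) (bound := fun _ => C) (s := Metric.ball t₀ 1) (μ := volume) (Metric.ball_mem_nhds t₀ zero_lt_one)
      (Filter.Eventually.of_forall fun t' =>
        ((contF.comp (continuous_id.prodMk continuous_const)).aestronglyMeasurable).restrict)
      ((contF.comp (continuous_id.prodMk continuous_const)).intervalIntegrable a b)
      ((contT.comp (continuous_id.prodMk continuous_const)).aestronglyMeasurable).restrict
      (Filter.Eventually.of_forall fun y hy t' ht' => by
        refine hC (y, t') ⟨hIob hy, ?_⟩
        rw [Metric.mem_ball, Real.dist_eq, abs_lt] at ht'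
        exact ⟨by linarith [ht'.1], by linarith [ht'.2]⟩)
      (intervalIntegrable_const)
      (Filter.Eventually.of_forall fun y hy t' ht' => hFt y t')
    have hzero_int : (∫ x in a..b, Th κ f₀ f₁ (x, t₀)) = 0 := by
      have h2 : ∫ x in a..b, Dh κ f₀ f₁ (x, t₀)
          = Gh κ f₀ f₁ (b, t₀) - Gh κ f₀ f₁ (a, t₀) :=
        intervalIntegral.integral_eq_sub_of_hasDerivAt (fun x _ => hGx x t₀)
          ((contD.comp (continuous_id.prodMk continuous_const)).intervalIntegrable a b)
      have h1 : (∫ x in a..b, Th κ f₀ f₁ (x, t₀)) = ∫ x in a..b, Dh κ f₀ f₁ (x, t₀) :=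
        intervalIntegral.integral_congr fun x _ => key x t₀
      rw [h1, h2, hGz t₀ a haK, hGz t₀ b hbK, sub_zero]
    rw [← hzero_int]
    exact hmain.2
  intro t₁ t₂
  rw [hIeq t₁, hIeq t₂]
  exact is_const_of_deriv_eq_zero (fun t => (hderiv t).differentiableAt)
    (fun t => (hderiv t).deriv) t₁ t₂

end NLSHAux

end NLSHAux

open NLSHAux

/-- For C² solutions of the NLSH system that vanish (in x) outside a
compact set, the modified Hamiltonian
H̄(t) = ∫ (q₁* ∂ₓq₀ + q₁ ∂ₓq₀* − |q₁|² − (κ/2)|q₀|⁴) dx is constant in t. -/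
theorem nlsh_hamiltonian_conserved (τ κ : ℝ) (hτ : 0 < τ)
    (q₀ q₁ : ℝ → ℝ → ℂ)
    (hq₀ : ContDiff ℝ 2 (fun p : ℝ × ℝ => q₀ p.1 p.2))
    (hq₁ : ContDiff ℝ 2 (fun p : ℝ × ℝ => q₁ p.1 p.2))
    (heq₀ : ∀ x t : ℝ,
      Complex.I * deriv (fun s => q₀ x s) t + deriv (fun y => q₁ y t) x
        = -(κ : ℂ) * ((‖q₀ x t‖ : ℂ)) ^ 2 * q₀ x t)
    (heq₁ : ∀ x t : ℝ,
      Complex.I * (τ : ℂ) * deriv (fun s => q₁ x s) t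
        = deriv (fun y => q₀ y t) x - q₁ x t)
    (K : Set ℝ) (hK : IsCompact K)
    (hsupp : ∀ x ∉ K, ∀ t : ℝ, q₀ x t = 0 ∧ q₁ x t = 0) :
    ∀ t₁ t₂ : ℝ,
      (∫ x : ℝ, ((starRingEnd ℂ) (q₁ x t₁) * deriv (fun y => q₀ y t₁) x
          + q₁ x t₁ * (starRingEnd ℂ) (deriv (fun y => q₀ y t₁) x)
          - ((‖q₁ x t₁‖ : ℂ)) ^ 2
          - ((κ : ℂ) / 2) * ((‖q₀ x t₁‖ : ℂ)) ^ 4))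
      = (∫ x : ℝ, ((starRingEnd ℂ) (q₁ x t₂) * deriv (fun y => q₀ y t₂) x
          + q₁ x t₂ * (starRingEnd ℂ) (deriv (fun y => q₀ y t₂) x)
          - ((‖q₁ x t₂‖ : ℂ)) ^ 2
          - ((κ : ℂ) / 2) * ((‖q₀ x t₂‖ : ℂ)) ^ 4)) := by
  classical
  set F0 : ℝ × ℝ → ℂ := fun p => q₀ p.1 p.2 with hF0
  set F1 : ℝ × ℝ → ℂ := fun p => q₁ p.1 p.2 with hF1
  have hd₀ : ∀ p : ℝ × ℝ, DifferentiableAt ℝ F0 p :=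
    fun p => (hq₀.differentiable two_ne_zero).differentiableAt
  have hd₁ : ∀ p : ℝ × ℝ, DifferentiableAt ℝ F1 p :=
    fun p => (hq₁.differentiable two_ne_zero).differentiableAt
  have hder₀x : ∀ x t : ℝ, deriv (fun y => q₀ y t) x = pdx F0 (x, t) := by
    intro x t
    exact HasDerivAt.deriv (by exact hasDerivAt_pdx (hd₀ (x, t)))
  have hder₁x : ∀ x t : ℝ, deriv (fun y => q₁ y t) x = pdx F1 (x, t) := by
    intro x t
    exact HasDerivAt.deriv (by exact hasDerivAt_pdx (hd₁ (x, t)))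
  have hder₀t : ∀ x t : ℝ, deriv (fun s => q₀ x s) t = pdt F0 (x, t) := by
    intro x t
    exact HasDerivAt.deriv (by exact hasDerivAt_pdt (hd₀ (x, t)))
  have hder₁t : ∀ x t : ℝ, deriv (fun s => q₁ x s) t = pdt F1 (x, t) := by
    intro x t
    exact HasDerivAt.deriv (by exact hasDerivAt_pdt (hd₁ (x, t)))
  have habs2 : ∀ z : ℂ, ((‖z‖ : ℂ)) ^ 2 = (starRingEnd ℂ) z * z := by
    intro z
    rw [← Complex.ofReal_pow, Complex.sq_norm, Complex.normSq_eq_conj_mul_self]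
  have habs4 : ∀ z : ℂ, ((‖z‖ : ℂ)) ^ 4
      = ((starRingEnd ℂ) z * z) * ((starRingEnd ℂ) z * z) := by
    intro z
    have h : ((‖z‖ : ℂ)) ^ 4 = (((‖z‖ : ℂ)) ^ 2) ^ 2 := by ring
    rw [h, habs2, sq]
  have e0 : ∀ p : ℝ × ℝ, Complex.I * pdt F0 p + pdx F1 p
      = -(κ : ℂ) * ((starRingEnd ℂ) (F0 p) * F0 p) * F0 p := by
    rintro ⟨x, t⟩
    have h := heq₀ x t
    rw [hder₀t, hder₁x, habs2] at h
    exact h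
  have e1 : ∀ p : ℝ × ℝ, Complex.I * (τ : ℂ) * pdt F1 p = pdx F0 p - F1 p := by
    rintro ⟨x, t⟩
    have h := heq₁ x t
    rw [hder₁t, hder₀x] at h
    exact h
  have hsupp' : ∀ x ∉ K, ∀ t : ℝ, F0 (x, t) = 0 ∧ F1 (x, t) = 0 := fun x hx t => hsupp x hx t
  have hmain := main_aux τ κ hτ F0 F1 hq₀ hq₁ e0 e1 K hK hsupp'
  intro t₁ t₂
  have hcongr : ∀ t : ℝ,
      (∫ x : ℝ, ((starRingEnd ℂ) (q₁ x t) * deriv (fun y => q₀ y t) x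
          + q₁ x t * (starRingEnd ℂ) (deriv (fun y => q₀ y t) x)
          - ((‖q₁ x t‖ : ℂ)) ^ 2
          - ((κ : ℂ) / 2) * ((‖q₀ x t‖ : ℂ)) ^ 4))
      = ∫ x : ℝ, Fh κ F0 F1 (x, t) := by
    intro t
    refine integral_congr_ae (Filter.Eventually.of_forall fun x => ?_)
    unfold Fh
    beta_reduce
    rw [hder₀x, habs2, habs4]
  rw [hcongr t₁, hcongr t₂]
  exact hmain t₁ t₂
end

section
/- Let μ, κ, τ ∈ ℝ with μ/κ > 0 and κ(μτ − 1) > 0, set σ = √(μ/κ), and let K₀ ∈ ℝ. Then the function q̃₀(x) = σ · tanh( σ √(κ(μτ − 1)/2) · x + K₀ ) is twice differentiable and satisfies (1/(1 − μτ)) q̃₀''(x) − μ q̃₀(x) + κ q̃₀(x)³ = 0 for all x ∈ ℝ. (In particular this covers the defocusing case κ < 0, μ < 0, τ ≥ 0.) -/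
/-- With μ/κ > 0, κ(μτ − 1) > 0 and σ = √(μ/κ), the function
q̃₀(x) = σ tanh(σ √(κ(μτ−1)/2) x + K₀) is twice differentiable and solves
(1/(1−μτ)) q̃₀'' − μ q̃₀ + κ q̃₀³ = 0. -/
theorem nlsh_standing_front_solves_ode (μ κ τ : ℝ)
    (h₁ : 0 < μ / κ) (h₂ : 0 < κ * (μ * τ - 1)) (K₀ : ℝ)
    (σ : ℝ) (hσ : σ = Real.sqrt (μ / κ))
    (q : ℝ → ℝ)
    (hq : q = fun x => σ * Real.tanh (σ * Real.sqrt (κ * (μ * τ - 1) / 2) * x + K₀)) :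
    Differentiable ℝ q ∧ Differentiable ℝ (deriv q) ∧
    ∀ x : ℝ,
      (1 / (1 - μ * τ)) * deriv (deriv q) x - μ * q x + κ * (q x) ^ 3 = 0 := by
  set a : ℝ := σ * Real.sqrt (κ * (μ * τ - 1) / 2) with ha
  have hκ : κ ≠ 0 := by
    rintro rfl; simp at h₁
  have hne : μ * τ - 1 ≠ 0 := by
    intro h; rw [h, mul_zero] at h₂; exact lt_irrefl 0 h₂
  have hmt : 1 - μ * τ ≠ 0 := by
    intro h; apply hne; linarith
  have hσ2 : σ ^ 2 = μ / κ := by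
    rw [hσ, Real.sq_sqrt h₁.le]
  have ha2 : a ^ 2 = μ * (μ * τ - 1) / 2 := by
    rw [ha, mul_pow, hσ2, Real.sq_sqrt (by positivity : (0:ℝ) ≤ κ * (μ * τ - 1) / 2)]
    field_simp
  -- rewrite q using sinh/cosh
  have hqsc : q = fun x => σ * (Real.sinh (a * x + K₀) / Real.cosh (a * x + K₀)) := by
    rw [hq]; funext x; rw [Real.tanh_eq_sinh_div_cosh]
  have hcne : ∀ x : ℝ, Real.cosh (a * x + K₀) ≠ 0 := fun x => (Real.cosh_pos _).ne'
  have hu : ∀ x : ℝ, HasDerivAt (fun y => a * y + K₀) a x := by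
    intro x
    simpa using ((hasDerivAt_id x).const_mul a).add_const K₀
  have hd1 : ∀ x : ℝ, HasDerivAt q (σ * a / Real.cosh (a * x + K₀) ^ 2) x := by
    intro x
    rw [hqsc]
    have hs : HasDerivAt (fun y => Real.sinh (a * y + K₀))
        (Real.cosh (a * x + K₀) * a) x := (Real.hasDerivAt_sinh _).comp x (hu x)
    have hc : HasDerivAt (fun y => Real.cosh (a * y + K₀))
        (Real.sinh (a * x + K₀) * a) x := (Real.hasDerivAt_cosh _).comp x (hu x)
    have := ((hs.div hc (hcne x)).const_mul σ)
    refine this.congr_deriv ?_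
    have h1 := Real.cosh_sq_sub_sinh_sq (a * x + K₀)
    have hnum : Real.cosh (a * x + K₀) * a * Real.cosh (a * x + K₀) -
        Real.sinh (a * x + K₀) * (Real.sinh (a * x + K₀) * a) = a := by
      linear_combination a * h1
    rw [hnum]
    ring
  have hderiv : deriv q = fun x => σ * a / Real.cosh (a * x + K₀) ^ 2 := by
    funext x; exact (hd1 x).deriv
  have hd2 : ∀ x : ℝ, HasDerivAt (deriv q)
      (-2 * σ * a ^ 2 * Real.sinh (a * x + K₀) / Real.cosh (a * x + K₀) ^ 3) x := by
    intro x
    rw [hderiv]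
    have hc : HasDerivAt (fun y => Real.cosh (a * y + K₀) ^ 2)
        (2 * Real.cosh (a * x + K₀) * (Real.sinh (a * x + K₀) * a)) x := by
      have := ((Real.hasDerivAt_cosh _).comp x (hu x)).pow 2
      exact this.congr_deriv (by simp only [Function.comp]; ring)
    have := (hasDerivAt_const x (σ * a)).div hc (pow_ne_zero 2 (hcne x))
    refine this.congr_deriv ?_
    field_simp
    ring
  refine ⟨fun x => (hd1 x).differentiableAt, fun x => (hd2 x).differentiableAt, fun x => ?_⟩
  have hdd : deriv (deriv q) x
      = -2 * σ * a ^ 2 * Real.sinh (a * x + K₀) / Real.cosh (a * x + K₀) ^ 3 :=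
    (hd2 x).deriv
  rw [hdd, hqsc]
  simp only
  have h1 : Real.cosh (a * x + K₀) ^ 2 - Real.sinh (a * x + K₀) ^ 2 = 1 :=
    Real.cosh_sq_sub_sinh_sq _
  have hcpos : (0:ℝ) < Real.cosh (a * x + K₀) := Real.cosh_pos _
  have hσμ : σ ^ 2 * κ = μ := by rw [hσ2]; field_simp
  generalize Real.sinh (a * x + K₀) = s at h1 ⊢
  generalize Real.cosh (a * x + K₀) = c at h1 hcpos ⊢
  have hc : c ≠ 0 := hcpos.ne'
  clear_value a
  field_simp
  linear_combination (-2*σ*s) * ha2 + (σ*s^3*(1-μ*τ)) * hσμ +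
    (-σ*μ*(1-μ*τ)*s) * h1
end

section
/- Let μ, κ ∈ ℝ with μ < 0, κ < 0, let τ > 0, set σ = √(μ/κ), and let K₀ ∈ ℝ. Define q̃₀(x) = σ tanh( σ √(κ(μτ − 1)/2) x + K₀ ) and q̃₁(x) = ( σ² √(κ(μτ − 1)/2) / (1 − μτ) ) · sech²( σ √(κ(μτ − 1)/2) x + K₀ ). Then the pair q₀(x,t) = e^{iμt} q̃₀(x), q₁(x,t) = e^{iμt} q̃₁(x) satisfies the NLSH system i ∂ₜq₀ + ∂ₓq₁ = −κ|q₀|²q₀, i τ ∂ₜq₁ = ∂ₓq₀ − q₁ at every point of ℝ × ℝ (a standing front solution of the defocusing NLSH system). -/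
/-- Standing front solution of the defocusing NLSH system:
with μ, κ < 0, τ > 0, σ = √(μ/κ), the pair
q₀ = e^{iμt} σ tanh(σ√(κ(μτ−1)/2)x + K₀),
q₁ = e^{iμt} (σ²√(κ(μτ−1)/2)/(1−μτ)) sech²(σ√(κ(μτ−1)/2)x + K₀)
satisfies the NLSH system pointwise. -/
theorem nlsh_standing_front_solution (μ κ τ : ℝ)
    (hμ : μ < 0) (hκ : κ < 0) (hτ : 0 < τ) (K₀ : ℝ)
    (σ : ℝ) (hσ : σ = Real.sqrt (μ / κ))
    (f g : ℝ → ℝ)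
    (hf : f = fun x => σ * Real.tanh (σ * Real.sqrt (κ * (μ * τ - 1) / 2) * x + K₀))
    (hg : g = fun x => (σ ^ 2 * Real.sqrt (κ * (μ * τ - 1) / 2) / (1 - μ * τ)) *
      (1 / Real.cosh (σ * Real.sqrt (κ * (μ * τ - 1) / 2) * x + K₀)) ^ 2) :
    ∀ x t : ℝ,
      (Complex.I * deriv (fun s : ℝ => Complex.exp (Complex.I * (μ : ℂ) * s) * (f x : ℂ)) t
        + deriv (fun y : ℝ => Complex.exp (Complex.I * (μ : ℂ) * t) * (g y : ℂ)) x
        = -(κ : ℂ) * ((‖Complex.exp (Complex.I * (μ : ℂ) * t) * (f x : ℂ)‖ : ℝ) : ℂ) ^ 2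
            * (Complex.exp (Complex.I * (μ : ℂ) * t) * (f x : ℂ))) ∧
      (Complex.I * (τ : ℂ) * deriv (fun s : ℝ => Complex.exp (Complex.I * (μ : ℂ) * s) * (g x : ℂ)) t
        = deriv (fun y : ℝ => Complex.exp (Complex.I * (μ : ℂ) * t) * (f y : ℂ)) x
          - Complex.exp (Complex.I * (μ : ℂ) * t) * (g x : ℂ)) := by
  intro x t
  have hκ0 : κ ≠ 0 := ne_of_lt hκ
  have hμτ : μ * τ < 0 := mul_neg_of_neg_of_pos hμ hτ
  have h1μτ : (0:ℝ) < 1 - μ * τ := by linarith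
  have h1μτ0 : (1:ℝ) - μ * τ ≠ 0 := ne_of_gt h1μτ
  set b := Real.sqrt (κ * (μ * τ - 1) / 2) with hbdef
  have hb2 : b ^ 2 = κ * (μ * τ - 1) / 2 := Real.sq_sqrt (by nlinarith)
  have hσ2 : σ ^ 2 = μ / κ := by
    rw [hσ]; exact Real.sq_sqrt (le_of_lt (div_pos_of_neg_of_neg hμ hκ))
  have hμeq : μ = κ * σ ^ 2 := by rw [hσ2]; field_simp
  set θ : ℝ := σ * b * x + K₀ with hθ
  have hc0 : Real.cosh θ ≠ 0 := ne_of_gt (Real.cosh_pos θ)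
  have hcs : Real.cosh θ ^ 2 = Real.sinh θ ^ 2 + 1 := Real.cosh_sq θ
  have hθd : HasDerivAt (fun y : ℝ => σ * b * y + K₀) (σ * b) x := by
    simpa using ((hasDerivAt_id x).const_mul (σ * b)).add_const K₀
  -- derivative of f
  have hfd : HasDerivAt f (σ * (σ * b) / Real.cosh θ ^ 2) x := by
    rw [hf]
    have hs : HasDerivAt (fun y : ℝ => Real.sinh (σ * b * y + K₀))
        (Real.cosh θ * (σ * b)) x := by have := (Real.hasDerivAt_sinh θ).comp x hθd; exact this
    have hc : HasDerivAt (fun y : ℝ => Real.cosh (σ * b * y + K₀))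
        (Real.sinh θ * (σ * b)) x := by have := (Real.hasDerivAt_cosh θ).comp x hθd; exact this
    have hdiv := (hs.div hc hc0).const_mul σ
    have heq : (fun y : ℝ => σ * Real.tanh (σ * b * y + K₀)) =
        fun y : ℝ => σ * (Real.sinh (σ * b * y + K₀) / Real.cosh (σ * b * y + K₀)) := by
      funext y; rw [Real.tanh_eq_sinh_div_cosh]
    rw [heq]
    refine hdiv.congr_deriv (Eq.symm ?_)
    show σ * (σ * b) / Real.cosh θ ^ 2 =
      σ * ((Real.cosh θ * (σ * b) * Real.cosh θ - Real.sinh θ * (Real.sinh θ * (σ * b))) /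
        Real.cosh θ ^ 2)
    have hnum : Real.cosh θ * (σ * b) * Real.cosh θ - Real.sinh θ * (Real.sinh θ * (σ * b))
        = σ * b := by
      have h := Real.cosh_sq_sub_sinh_sq θ
      linear_combination (σ * b) * h
    rw [hnum]
    ring
  -- derivative of g
  have hgd : HasDerivAt g
      (σ ^ 2 * b / (1 - μ * τ) * (2 * (1 / Real.cosh θ) *
        (-(Real.sinh θ * (σ * b)) / Real.cosh θ ^ 2))) x := by
    rw [hg]
    have hc : HasDerivAt (fun y : ℝ => Real.cosh (σ * b * y + K₀))
        (Real.sinh θ * (σ * b)) x := by have := (Real.hasDerivAt_cosh θ).comp x hθd; exact this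
    have hinv : HasDerivAt (fun y : ℝ => (Real.cosh (σ * b * y + K₀))⁻¹)
        (-(Real.sinh θ * (σ * b)) / Real.cosh θ ^ 2) x := hc.inv hc0
    have h2 := (hinv.pow 2).const_mul (σ ^ 2 * b / (1 - μ * τ))
    simp only [one_div]
    refine h2.congr_deriv ?_
    ring
  -- complex derivative in t
  have hexp : ∀ (c : ℂ), HasDerivAt (fun s : ℝ => Complex.exp (Complex.I * (μ:ℂ) * s) * c)
      (Complex.I * μ * Complex.exp (Complex.I * (μ:ℂ) * t) * c) t := by
    intro c
    have h0 : HasDerivAt (fun s : ℝ => (s : ℂ)) 1 t := (hasDerivAt_id t).ofReal_comp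
    have h1 : HasDerivAt (fun s : ℝ => Complex.I * (μ:ℂ) * s) (Complex.I * μ) t := by
      simpa using h0.const_mul (Complex.I * (μ:ℂ))
    have h2 := h1.cexp.mul_const c
    refine h2.congr_deriv ?_; ring
  -- complex derivative in x
  have hxderiv : ∀ (F : ℝ → ℝ) (F' : ℝ), HasDerivAt F F' x →
      deriv (fun y : ℝ => Complex.exp (Complex.I * (μ:ℂ) * t) * (F y : ℂ)) x
      = Complex.exp (Complex.I * (μ:ℂ) * t) * (F' : ℂ) := by
    intro F F' hF
    exact ((hF.ofReal_comp).const_mul (Complex.exp (Complex.I * (μ:ℂ) * t))).deriv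
  have habs : ((‖Complex.exp (Complex.I * (μ:ℂ) * t) * (f x : ℂ)‖ : ℝ) : ℂ) ^ 2
      = ((f x : ℝ) : ℂ) ^ 2 := by
    rw [norm_mul, Complex.norm_exp]
    have hre : (Complex.I * (μ:ℂ) * t).re = 0 := by simp
    rw [hre, Real.exp_zero, one_mul, Complex.norm_real, Real.norm_eq_abs]
    norm_cast
    exact sq_abs _
  set e : ℂ := Complex.exp (Complex.I * (μ:ℂ) * t) with he
  constructor
  · rw [(hexp (f x : ℂ)).deriv, hxderiv g _ hgd, habs]
    have key1 : -μ * f x + σ ^ 2 * b / (1 - μ * τ) * (2 * (1 / Real.cosh θ) *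
        (-(Real.sinh θ * (σ * b)) / Real.cosh θ ^ 2)) = -κ * (f x) ^ 3 := by
      simp only [hf]
      rw [Real.tanh_eq_sinh_div_cosh]
      have hb2' : 2 * b ^ 2 = κ * (μ * τ - 1) := by linarith
      field_simp
      simp only [← hθ]
      linear_combination
        (- σ * Real.sinh θ * (1 - μ * τ) * Real.cosh θ ^ 5) * hμeq
        + (- σ ^ 3 * Real.sinh θ * Real.cosh θ ^ 3) * hb2'
        + (- κ * σ ^ 3 * Real.sinh θ * (1 - μ * τ) * Real.cosh θ ^ 3) * hcs
    have keyC : (-(μ:ℂ)) * (f x : ℂ) + ((σ ^ 2 * b / (1 - μ * τ) * (2 * (1 / Real.cosh θ) *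
        (-(Real.sinh θ * (σ * b)) / Real.cosh θ ^ 2)) : ℝ) : ℂ) = -(κ:ℂ) * (f x : ℂ) ^ 3 := by
      exact_mod_cast congrArg (fun r : ℝ => (r : ℂ)) key1
    linear_combination e * keyC + (μ:ℂ) * e * (f x : ℂ) * Complex.I_mul_I
  · rw [(hexp (g x : ℂ)).deriv, hxderiv f _ hfd]
    have key2 : -(τ * μ) * g x = σ * (σ * b) / Real.cosh θ ^ 2 - g x := by
      simp only [hg]
      field_simp
      simp only [← hθ]
      linear_combination (σ ^ 2 * b * Real.cosh θ ^ 2) * mul_inv_cancel₀ (show (1:ℝ) - τ * μ ≠ 0 by rw [mul_comm]; exact h1μτ0)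
    have keyC : (-((τ:ℝ) * μ) * g x : ℝ) = ((σ * (σ * b) / Real.cosh θ ^ 2 - g x : ℝ) : ℂ) := by
      exact_mod_cast congrArg (fun r : ℝ => (r : ℂ)) key2
    push_cast at keyC ⊢
    linear_combination e * keyC + (τ:ℂ) * (μ:ℂ) * e * (g x : ℂ) * Complex.I_mul_I
end

section
/- Let μ, κ ∈ ℝ with μ > 0, κ > 0, let τ > 0 satisfy μτ < 1, set σ = √(μ/κ), and let K₁ ∈ ℝ. Define q̃₀(x) = √2 σ sech( √(μ(1 − μτ)) x + K₁ ) and q̃₁(x) = ( −√(2μ) σ / √(1 − μτ) ) · sech( √(μ(1 − μτ)) x + K₁ ) · tanh( √(μ(1 − μτ)) x + K₁ ). Then the pair q₀(x,t) = e^{iμt} q̃₀(x), q₁(x,t) = e^{iμt} q̃₁(x) satisfies the NLSH system i ∂ₜq₀ + ∂ₓq₁ = −κ|q₀|²q₀, i τ ∂ₜq₁ = ∂ₓq₀ − q₁ at every point of ℝ × ℝ (a standing solitary-wave solution of the focusing NLSH system). -/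
/-- Standing solitary-wave solution of the focusing NLSH system:
with μ, κ > 0, 0 < τ, μτ < 1, σ = √(μ/κ), the pair
q₀ = e^{iμt} √2 σ sech(√(μ(1−μτ))x + K₁),
q₁ = e^{iμt} (−√(2μ) σ/√(1−μτ)) sech(√(μ(1−μτ))x + K₁) tanh(√(μ(1−μτ))x + K₁)
satisfies the NLSH system pointwise. -/
theorem nlsh_standing_solitary_solution (μ κ τ : ℝ)
    (hμ : 0 < μ) (hκ : 0 < κ) (hτ : 0 < τ) (hμτ : μ * τ < 1) (K₁ : ℝ)
    (σ : ℝ) (hσ : σ = Real.sqrt (μ / κ))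
    (f g : ℝ → ℝ)
    (hf : f = fun x => Real.sqrt 2 * σ *
      (1 / Real.cosh (Real.sqrt (μ * (1 - μ * τ)) * x + K₁)))
    (hg : g = fun x => (-Real.sqrt (2 * μ) * σ / Real.sqrt (1 - μ * τ)) *
      (1 / Real.cosh (Real.sqrt (μ * (1 - μ * τ)) * x + K₁)) *
      Real.tanh (Real.sqrt (μ * (1 - μ * τ)) * x + K₁)) :
    ∀ x t : ℝ,
      (Complex.I * deriv (fun s : ℝ => Complex.exp (Complex.I * (μ : ℂ) * s) * (f x : ℂ)) t
        + deriv (fun y : ℝ => Complex.exp (Complex.I * (μ : ℂ) * t) * (g y : ℂ)) x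
        = -(κ : ℂ) * ((‖Complex.exp (Complex.I * (μ : ℂ) * t) * (f x : ℂ)‖ : ℝ) : ℂ) ^ 2
            * (Complex.exp (Complex.I * (μ : ℂ) * t) * (f x : ℂ))) ∧
      (Complex.I * (τ : ℂ) * deriv (fun s : ℝ => Complex.exp (Complex.I * (μ : ℂ) * s) * (g x : ℂ)) t
        = deriv (fun y : ℝ => Complex.exp (Complex.I * (μ : ℂ) * t) * (f y : ℂ)) x
          - Complex.exp (Complex.I * (μ : ℂ) * t) * (g x : ℂ)) := by
  intro x t
  have hb : (0:ℝ) < 1 - μ * τ := by linarith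
  set a : ℝ := Real.sqrt (μ * (1 - μ * τ)) with ha_def
  set u : ℝ := a * x + K₁ with hu_def
  have ha : a = Real.sqrt μ * Real.sqrt (1 - μ * τ) := Real.sqrt_mul hμ.le _
  have hsb : Real.sqrt (1 - μ * τ) ^ 2 = 1 - μ * τ := Real.sq_sqrt hb.le
  have hsbne : Real.sqrt (1 - μ * τ) ≠ 0 := by positivity
  have hμsq : Real.sqrt μ ^ 2 = μ := Real.sq_sqrt hμ.le
  have h2μ : Real.sqrt (2 * μ) = Real.sqrt 2 * Real.sqrt μ := Real.sqrt_mul (by norm_num) _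
  have h2 : Real.sqrt 2 ^ 2 = 2 := Real.sq_sqrt (by norm_num)
  have hσ2 : κ * σ ^ 2 = μ := by
    rw [hσ, Real.sq_sqrt (by positivity)]; field_simp
  have hc : 0 < Real.cosh u := Real.cosh_pos u
  have hcne : Real.cosh u ≠ 0 := hc.ne'
  have hsq : Real.cosh u ^ 2 = Real.sinh u ^ 2 + 1 := Real.cosh_sq u
  -- derivative of inner affine map
  have hu : HasDerivAt (fun y : ℝ => a * y + K₁) a x := by
    simpa using ((hasDerivAt_id x).const_mul a).add_const K₁
  have hch : HasDerivAt (fun y : ℝ => Real.cosh (a * y + K₁)) (Real.sinh u * a) x :=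
    by rw [hu_def]; exact (Real.hasDerivAt_cosh (a * x + K₁)).comp x hu
  have hsh : HasDerivAt (fun y : ℝ => Real.sinh (a * y + K₁)) (Real.cosh u * a) x :=
    by rw [hu_def]; exact (Real.hasDerivAt_sinh (a * x + K₁)).comp x hu
  -- derivative of f
  have hf' : HasDerivAt f (Real.sqrt 2 * σ * (-(Real.sinh u * a) / Real.cosh u ^ 2)) x := by
    rw [hf]
    simpa [one_div] using (hch.inv hcne).const_mul (Real.sqrt 2 * σ)
  -- rewrite g without tanh
  set C : ℝ := -Real.sqrt (2 * μ) * σ / Real.sqrt (1 - μ * τ) with hC_def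
  have hgeq : g = fun y => C * (Real.sinh (a * y + K₁) * ((Real.cosh (a * y + K₁) ^ 2)⁻¹)) := by
    rw [hg]; funext y
    rw [Real.tanh_eq_sinh_div_cosh]
    ring
  have hpow : HasDerivAt (fun y : ℝ => Real.cosh (a * y + K₁) ^ 2)
      (2 * Real.cosh u ^ 1 * (Real.sinh u * a)) x := hch.pow 2
  have hg' : HasDerivAt g
      (C * (Real.cosh u * a * (Real.cosh u ^ 2)⁻¹ +
        Real.sinh u * (-(2 * Real.cosh u ^ 1 * (Real.sinh u * a)) / (Real.cosh u ^ 2) ^ 2))) x := by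
    rw [hgeq]
    exact (hsh.mul (hpow.inv (pow_ne_zero 2 hcne))).const_mul C
  have hgx : g x = C * (Real.sinh u * (Real.cosh u ^ 2)⁻¹) := by rw [hgeq]
  have hfx : f x = Real.sqrt 2 * σ * (1 / Real.cosh u) := by rw [hf]
  clear_value a u C
  -- scalar key identities
  have hCb : C * Real.sqrt (1 - μ * τ) = -(Real.sqrt 2 * Real.sqrt μ * σ) := by
    rw [hC_def, h2μ]; field_simp
  have hC1 : (1 - μ * τ) * C = -(Real.sqrt 2 * Real.sqrt μ * σ * Real.sqrt (1 - μ * τ)) := by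
    rw [hC_def, h2μ]
    field_simp
    linear_combination σ * hsb
  have hCa : C * a = -(Real.sqrt 2 * μ * σ) := by
    rw [ha]
    linear_combination Real.sqrt μ * hCb - Real.sqrt 2 * σ * hμsq
  -- real equation 2 : f' = (1-μτ) g
  have key2 : Real.sqrt 2 * σ * (-(Real.sinh u * a) / Real.cosh u ^ 2)
      = (1 - μ * τ) * g x := by
    rw [hgx, ha]
    linear_combination (-(Real.sinh u * (Real.cosh u ^ 2)⁻¹)) * hC1
  -- real equation 1 : g' = μ f - κ f³
  have e1 : C * (Real.cosh u * a * (Real.cosh u ^ 2)⁻¹ +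
        Real.sinh u * (-(2 * Real.cosh u ^ 1 * (Real.sinh u * a)) / (Real.cosh u ^ 2) ^ 2))
      = (C * a) * ((Real.cosh u ^ 2 - 2 * Real.sinh u ^ 2) / Real.cosh u ^ 3) := by
    field_simp
    ring
  have key1 : C * (Real.cosh u * a * (Real.cosh u ^ 2)⁻¹ +
        Real.sinh u * (-(2 * Real.cosh u ^ 1 * (Real.sinh u * a)) / (Real.cosh u ^ 2) ^ 2))
      = μ * f x - κ * (f x) ^ 3 := by
    rw [e1, hCa, hfx]
    field_simp
    linear_combination (-(2 * μ * σ)) * hsq +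
      (κ * σ ^ 3) * h2 +
      (2 * σ) * hσ2
  -- time derivative lemma
  have hTgen : ∀ c : ℂ, deriv (fun s : ℝ => Complex.exp (Complex.I * (μ : ℂ) * s) * c) t
      = Complex.I * (μ : ℂ) * Complex.exp (Complex.I * (μ : ℂ) * t) * c := by
    intro c
    have h1 : HasDerivAt (fun z : ℂ => Complex.exp (Complex.I * (μ : ℂ) * z))
        (Complex.exp (Complex.I * (μ : ℂ) * t) * (Complex.I * (μ : ℂ))) (t : ℂ) := by
      have h0 : HasDerivAt (fun z : ℂ => Complex.I * (μ : ℂ) * z) (Complex.I * (μ : ℂ)) (t : ℂ) := by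
        simpa using (hasDerivAt_id ((t : ℝ) : ℂ)).const_mul (Complex.I * (μ : ℂ))
      exact (Complex.hasDerivAt_exp (Complex.I * (μ : ℂ) * t)).comp (t : ℂ) h0
    have := (h1.comp_ofReal.mul_const c).deriv
    rw [this]; ring
  -- space derivative lemmas
  have hXf : deriv (fun y : ℝ => Complex.exp (Complex.I * (μ : ℂ) * t) * (f y : ℂ)) x
      = Complex.exp (Complex.I * (μ : ℂ) * t)
        * ((Real.sqrt 2 * σ * (-(Real.sinh u * a) / Real.cosh u ^ 2) : ℝ) : ℂ) :=
    (hf'.ofReal_comp.const_mul _).deriv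
  have hXg : deriv (fun y : ℝ => Complex.exp (Complex.I * (μ : ℂ) * t) * (g y : ℂ)) x
      = Complex.exp (Complex.I * (μ : ℂ) * t)
        * ((C * (Real.cosh u * a * (Real.cosh u ^ 2)⁻¹ +
            Real.sinh u * (-(2 * Real.cosh u ^ 1 * (Real.sinh u * a)) / (Real.cosh u ^ 2) ^ 2)) : ℝ) : ℂ) :=
    (hg'.ofReal_comp.const_mul _).deriv
  have habs : ‖Complex.exp (Complex.I * (μ : ℂ) * t) * (f x : ℂ)‖ = |f x| := by
    rw [norm_mul, Complex.norm_exp, Complex.norm_real, Real.norm_eq_abs]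
    simp [Complex.mul_re]
  constructor
  · rw [hTgen, hXg, habs]
    have hk1 : ((C * (Real.cosh u * a * (Real.cosh u ^ 2)⁻¹ +
        Real.sinh u * (-(2 * Real.cosh u ^ 1 * (Real.sinh u * a)) / (Real.cosh u ^ 2) ^ 2)) : ℝ) : ℂ)
        = (μ : ℂ) * ((f x : ℝ) : ℂ) - (κ : ℂ) * ((f x : ℝ) : ℂ) ^ 3 := by
      rw [key1]; push_cast; ring
    rw [hk1]
    have habs2 : ((|f x| : ℝ) : ℂ) ^ 2 = ((f x : ℝ) : ℂ) ^ 2 := by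
      norm_cast
      exact sq_abs _
    rw [habs2]
    linear_combination ((μ : ℂ) * Complex.exp (Complex.I * (μ : ℂ) * t) * ((f x : ℝ) : ℂ)) * Complex.I_sq
  · rw [hTgen, hXf]
    have hk2 : ((Real.sqrt 2 * σ * (-(Real.sinh u * a) / Real.cosh u ^ 2) : ℝ) : ℂ)
        = (1 - (μ : ℂ) * (τ : ℂ)) * ((g x : ℝ) : ℂ) := by
      rw [key2]; push_cast; ring
    rw [hk2]
    linear_combination ((τ : ℂ) * (μ : ℂ) * Complex.exp (Complex.I * (μ : ℂ) * t) * ((g x : ℝ) : ℂ)) * Complex.I_sq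
end

section
/- Let μ, κ ∈ ℝ with μ < 0 and κ < 0, set σ = √(μ/κ), and let K₀ ∈ ℝ. Then the function u(x,t) = e^{iμt} · σ tanh( σ √(−κ/2) x + K₀ ) satisfies the NLS equation i ∂ₜu + ∂ₓₓu + κ|u|²u = 0 at every point of ℝ × ℝ (the dark-soliton ground-state solution of the defocusing NLS equation). -/
lemma tanh_hasDerivAt (x : ℝ) :
    HasDerivAt Real.tanh (1 - Real.tanh x ^ 2) x := by
  have hc : Real.cosh x ≠ 0 := ne_of_gt (Real.cosh_pos x)
  have h := (Real.hasDerivAt_sinh x).div (Real.hasDerivAt_cosh x) hc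
  have heq : (Real.sinh / Real.cosh) = Real.tanh := by
    funext y; rw [Pi.div_apply, Real.tanh_eq_sinh_div_cosh]
  rw [heq] at h
  refine h.congr_deriv ?_
  rw [Real.tanh_eq_sinh_div_cosh]
  rw [div_pow, one_sub_div (pow_ne_zero 2 hc)]
  ring

/-- The dark soliton u(x,t) = e^{iμt} σ tanh(σ√(−κ/2) x + K₀),
with μ, κ < 0 and σ = √(μ/κ), solves the defocusing NLS equation
i uₜ + uₓₓ + κ|u|²u = 0. -/
theorem nls_dark_soliton (μ κ : ℝ) (hμ : μ < 0) (hκ : κ < 0) (K₀ : ℝ)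
    (σ : ℝ) (hσ : σ = Real.sqrt (μ / κ))
    (u : ℝ → ℝ → ℂ)
    (hu : u = fun (x t : ℝ) => Complex.exp (Complex.I * (μ : ℂ) * t) *
      ((σ * Real.tanh (σ * Real.sqrt (-κ / 2) * x + K₀) : ℝ) : ℂ)) :
    ∀ x t : ℝ,
      Complex.I * deriv (fun s => u x s) t
        + deriv (fun y => deriv (fun z => u z t) y) x
        + (κ : ℂ) * ((‖u x t‖ : ℝ) : ℂ) ^ 2 * u x t = 0 := by
  intro x t
  subst hu hσ
  beta_reduce
  set σ : ℝ := Real.sqrt (μ / κ) with hσ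
  set a : ℝ := σ * Real.sqrt (-κ / 2) with ha
  have hσ2 : σ ^ 2 = μ / κ := Real.sq_sqrt (le_of_lt (div_pos_of_neg_of_neg hμ hκ))
  have hκ0 : (κ : ℝ) ≠ 0 := ne_of_lt hκ
  have ha2 : a ^ 2 = -μ / 2 := by
    rw [ha, mul_pow, hσ2, Real.sq_sqrt (by linarith : (0:ℝ) ≤ -κ / 2)]
    field_simp
  -- abbreviations
  set E : ℂ := Complex.exp (Complex.I * (μ : ℂ) * t) with hE
  set T : ℝ := Real.tanh (a * x + K₀) with hT
  -- time derivative
  have hdt : deriv (fun s : ℝ => Complex.exp (Complex.I * (μ : ℂ) * s) *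
      ((σ * T : ℝ) : ℂ)) t = Complex.I * (μ : ℂ) * E * ((σ * T : ℝ) : ℂ) := by
    have h1 : HasDerivAt (fun s : ℝ => (Complex.I * (μ : ℂ)) * (s : ℂ))
        (Complex.I * (μ : ℂ)) t := by
      simpa using (Complex.ofRealCLM.hasDerivAt (x := t)).const_mul (Complex.I * (μ : ℂ))
    have h2 := (h1.cexp).mul_const ((σ * T : ℝ) : ℂ)
    have h3 : (fun s : ℝ => Complex.exp (Complex.I * (μ : ℂ) * s) * ((σ * T : ℝ) : ℂ))
        = fun s : ℝ => Complex.exp ((Complex.I * (μ : ℂ)) * (s : ℂ)) * ((σ * T : ℝ) : ℂ) := by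
      funext s; ring_nf
    rw [h3]
    rw [h2.deriv]
    rw [hE]; ring_nf
  -- spatial derivative (first): at any point y
  have hdx1 : ∀ y : ℝ, HasDerivAt (fun z : ℝ => Complex.exp (Complex.I * (μ : ℂ) * t) *
      ((σ * Real.tanh (a * z + K₀) : ℝ) : ℂ))
      (E * ((σ * ((1 - Real.tanh (a * y + K₀) ^ 2) * a) : ℝ) : ℂ)) y := by
    intro y
    have hin : HasDerivAt (fun z : ℝ => a * z + K₀) a y := by
      simpa using ((hasDerivAt_id y).const_mul a).add_const K₀
    have htanh := (tanh_hasDerivAt (a * y + K₀)).comp y hin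
    have hre : HasDerivAt (fun z : ℝ => σ * Real.tanh (a * z + K₀))
        (σ * ((1 - Real.tanh (a * y + K₀) ^ 2) * a)) y := htanh.const_mul σ
    exact (hre.ofReal_comp).const_mul E
  have hdx1' : deriv (fun z : ℝ => Complex.exp (Complex.I * (μ : ℂ) * t) *
      ((σ * Real.tanh (a * z + K₀) : ℝ) : ℂ))
      = fun y : ℝ => E * ((σ * ((1 - Real.tanh (a * y + K₀) ^ 2) * a) : ℝ) : ℂ) := by
    funext y; exact (hdx1 y).deriv
  -- second spatial derivative
  have hdx2 : HasDerivAt (fun y : ℝ => E *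
      ((σ * ((1 - Real.tanh (a * y + K₀) ^ 2) * a) : ℝ) : ℂ))
      (E * ((σ * ((-(2 * T * ((1 - T ^ 2) * a))) * a) : ℝ) : ℂ)) x := by
    have hin : HasDerivAt (fun z : ℝ => a * z + K₀) a x := by
      simpa using ((hasDerivAt_id x).const_mul a).add_const K₀
    have htanh : HasDerivAt (fun z : ℝ => Real.tanh (a * z + K₀)) ((1 - T ^ 2) * a) x :=
      by have := (tanh_hasDerivAt (a * x + K₀)).comp x hin; exact this
    have hpow := htanh.pow 2
    have hsub : HasDerivAt (fun y : ℝ => 1 - Real.tanh (a * y + K₀) ^ 2)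
        (-(2 * T * ((1 - T ^ 2) * a))) x := by
      simpa [hT] using hpow.const_sub 1
    have hre : HasDerivAt (fun y : ℝ => σ * ((1 - Real.tanh (a * y + K₀) ^ 2) * a))
        (σ * ((-(2 * T * ((1 - T ^ 2) * a))) * a)) x :=
      ((hsub.mul_const a).const_mul σ)
    exact (hre.ofReal_comp).const_mul E
  -- |u|² term
  have habs : ((‖E * ((σ * T : ℝ) : ℂ)‖ : ℝ) : ℂ) ^ 2 = ((σ * T : ℝ) : ℂ) ^ 2 := by
    rw [norm_mul, Complex.norm_real, Real.norm_eq_abs]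
    have hEabs : ‖E‖ = 1 := by
      rw [hE, Complex.norm_exp]
      simp [Complex.mul_re]
    rw [hEabs, one_mul, ← Complex.ofReal_pow, ← Complex.ofReal_pow, sq_abs]
  -- assemble
  rw [← hE] at hdx1'
  simp only [hdt, hdx1']
  rw [hdx2.deriv, habs]
  -- algebraic identity
  have hσ2' : (σ : ℂ) ^ 2 * (κ : ℂ) = (μ : ℂ) := by
    have : σ ^ 2 * κ = μ := by rw [hσ2]; field_simp
    exact_mod_cast congrArg (Complex.ofReal) this
  have ha2' : (a : ℂ) ^ 2 = -(μ : ℂ) / 2 := by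
    exact_mod_cast congrArg (Complex.ofReal) ha2
  simp only [Complex.ofReal_mul, Complex.ofReal_sub, Complex.ofReal_one,
    Complex.ofReal_pow, Complex.ofReal_neg, Complex.ofReal_ofNat]
  linear_combination ((μ:ℂ) * E * σ * T) * Complex.I_sq +
    ((2 - 4) * E * (σ:ℂ) * T * (1 - (T:ℂ)^2)) * ha2' +
    (E * (σ:ℂ) * (T:ℂ)^3) * hσ2'
end

section
/- Let μ, κ ∈ ℝ with μ < 0 and κ < 0, set σ = √(μ/κ), and let K₀ ∈ ℝ. For τ > 0 define the standing-front profile q̃₀^τ(x) = σ tanh( σ √(κ(μτ − 1)/2) x + K₀ ), and define the NLS ground-state profile u⁻(x) = σ tanh( σ √(−κ/2) x + K₀ ). Then there exist constants τ₀ > 0 and C > 0 such that for all τ ∈ (0, τ₀) and all x ∈ ℝ, |q̃₀^τ(x) − u⁻(x)| ≤ C τ. In particular, q̃₀^τ converges uniformly on ℝ, and linearly in τ, to u⁻ as τ → 0. -/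
lemma sinh_le_mul_exp_aux (u : ℝ) (hu : 0 ≤ u) : Real.sinh u ≤ u * Real.exp u := by
  have h1 : 1 - 2*u ≤ Real.exp (-(2*u)) := by
    have := Real.add_one_le_exp (-(2*u)); linarith
  have h2 : Real.exp (-u) = Real.exp (-(2*u)) * Real.exp u := by
    rw [← Real.exp_add]; ring_nf
  rw [Real.sinh_eq]
  nlinarith [Real.exp_pos u]

lemma cosh_ge_exp_abs (A : ℝ) : Real.exp |A| / 2 ≤ Real.cosh A := by
  rw [Real.cosh_eq]
  rcases abs_cases A with ⟨h, _⟩ | ⟨h, _⟩ <;> rw [h] <;>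
    nlinarith [Real.exp_pos A, Real.exp_pos (-A)]

lemma tanh_sub_bound (A B : ℝ) :
    |Real.tanh A - Real.tanh B| ≤ 4 * |A - B| * Real.exp (|A - B| - |A| - |B|) := by
  have hcA := Real.cosh_pos (x := A)
  have hcB := Real.cosh_pos (x := B)
  have eq : Real.tanh A - Real.tanh B
      = Real.sinh (A - B) / (Real.cosh A * Real.cosh B) := by
    rw [Real.sinh_sub, Real.tanh_eq_sinh_div_cosh, Real.tanh_eq_sinh_div_cosh]
    field_simp
  rw [eq, abs_div, abs_of_pos (mul_pos hcA hcB)]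
  have hnum : |Real.sinh (A - B)| ≤ |A - B| * Real.exp |A - B| := by
    rw [Real.abs_sinh]
    exact sinh_le_mul_exp_aux _ (abs_nonneg _)
  have hden : Real.exp (|A| + |B|) / 4 ≤ Real.cosh A * Real.cosh B := by
    have hA := cosh_ge_exp_abs A
    have hB := cosh_ge_exp_abs B
    have := mul_le_mul hA hB (by positivity) (le_of_lt hcA)
    calc Real.exp (|A| + |B|) / 4 = (Real.exp |A| / 2) * (Real.exp |B| / 2) := by
          rw [Real.exp_add]; ring
      _ ≤ _ := this
  have hdpos : (0:ℝ) < Real.exp (|A| + |B|) / 4 := by positivity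
  calc |Real.sinh (A - B)| / (Real.cosh A * Real.cosh B)
      ≤ (|A - B| * Real.exp |A - B|) / (Real.exp (|A| + |B|) / 4) :=
        div_le_div₀ (by positivity) hnum hdpos hden
    _ = 4 * |A - B| * Real.exp (|A - B| - |A| - |B|) := by
        rw [show |A - B| - |A| - |B| = |A - B| - (|A| + |B|) by ring,
          Real.exp_sub]
        field_simp

set_option maxHeartbeats 1000000 in
/-- The standing-front profiles q̃₀^τ(x) = σ tanh(σ√(κ(μτ−1)/2)x + K₀)
converge uniformly on ℝ, linearly in τ, to the NLS ground state
u⁻(x) = σ tanh(σ√(−κ/2)x + K₀) as τ → 0. -/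
theorem nlsh_front_uniform_linear_convergence (μ κ : ℝ)
    (hμ : μ < 0) (hκ : κ < 0) (K₀ : ℝ)
    (σ : ℝ) (hσ : σ = Real.sqrt (μ / κ)) :
    ∃ τ₀ > 0, ∃ C > 0, ∀ τ : ℝ, 0 < τ → τ < τ₀ → ∀ x : ℝ,
      |σ * Real.tanh (σ * Real.sqrt (κ * (μ * τ - 1) / 2) * x + K₀)
        - σ * Real.tanh (σ * Real.sqrt (-κ / 2) * x + K₀)| ≤ C * τ := by
  have hσpos : 0 < σ := by
    rw [hσ]; exact Real.sqrt_pos.mpr (div_pos_iff.mpr (Or.inr ⟨hμ, hκ⟩))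
  set b : ℝ := σ * Real.sqrt (-κ / 2) with hb
  have hbpos : 0 < b := by
    apply mul_pos hσpos
    exact Real.sqrt_pos.mpr (by linarith)
  refine ⟨1, one_pos, 2 * σ * (-μ) * Real.exp (2 * |K₀|),
    mul_pos (mul_pos (by linarith) (by linarith)) (Real.exp_pos _), ?_⟩
  intro τ hτ _ x
  set s : ℝ := Real.sqrt (1 - μ * τ) with hs
  have hμτ : 0 < -μ * τ := mul_pos (by linarith) hτ
  have hs1 : 1 ≤ s := by
    have := Real.sqrt_le_sqrt (show (1:ℝ) ≤ 1 - μ*τ by nlinarith)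
    simpa [hs] using this
  have hs2 : s ≤ 1 + (-μ * τ) / 2 := by
    rw [hs, show 1 + (-μ*τ)/2 = Real.sqrt ((1 + (-μ*τ)/2)^2) from
      (Real.sqrt_sq (by nlinarith)).symm]
    exact Real.sqrt_le_sqrt (by nlinarith)
  have hsqrt : Real.sqrt (κ * (μ * τ - 1) / 2) = Real.sqrt (-κ / 2) * s := by
    rw [hs, ← Real.sqrt_mul (by linarith : (0:ℝ) ≤ -κ/2)]
    congr 1; ring
  have hAeq : σ * Real.sqrt (κ * (μ * τ - 1) / 2) * x = b * s * x := by
    rw [hsqrt, hb]; ring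
  set A : ℝ := b * s * x + K₀ with hA
  set B : ℝ := b * x + K₀ with hB
  rw [hAeq, ← hA, ← mul_sub, abs_mul, abs_of_pos hσpos]
  have key := tanh_sub_bound A B
  set u : ℝ := b * |x| with hu
  have hupos : 0 ≤ u := by positivity
  have hd : |A - B| ≤ (-μ * τ) / 2 * u := by
    have : A - B = b * (s - 1) * x := by rw [hA, hB]; ring
    rw [this, abs_mul, abs_of_nonneg (by nlinarith : (0:ℝ) ≤ b * (s-1)), hu]
    nlinarith [abs_nonneg x]
  have hexp : |A - B| - |A| - |B| ≤ 2 * |K₀| - 2 * u := by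
    have habsA : b * s * |x| - |K₀| ≤ |A| := by
      rw [hA]
      have h := abs_add_le (b * s * x + K₀) (-K₀)
      simp only [add_neg_cancel_right, abs_neg] at h
      rw [abs_mul, abs_mul, abs_of_pos hbpos, abs_of_pos (by linarith : (0:ℝ) < s)] at h
      linarith
    have habsB : b * |x| - |K₀| ≤ |B| := by
      rw [hB]
      have h := abs_add_le (b * x + K₀) (-K₀)
      simp only [add_neg_cancel_right, abs_neg] at h
      rw [abs_mul, abs_of_pos hbpos] at h
      linarith
    have hdd : |A - B| = b * (s - 1) * |x| := by
      have : A - B = b * (s - 1) * x := by rw [hA, hB]; ring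
      rw [this, abs_mul, abs_of_nonneg (by nlinarith : (0:ℝ) ≤ b * (s-1))]
    rw [hdd, hu]
    nlinarith [abs_nonneg x]
  have hue : u * Real.exp (2 * |K₀| - 2 * u) ≤ Real.exp (2 * |K₀|) := by
    rw [show 2*|K₀| - 2*u = 2*|K₀| + -(2*u) by ring, Real.exp_add]
    have h1 : u * Real.exp (-(2*u)) ≤ 1 := by
      have h2 : u ≤ Real.exp (2*u) := by
        have := Real.add_one_le_exp (2*u); linarith
      have h3 : Real.exp (-(2*u)) = 1 / Real.exp (2*u) := by
        rw [Real.exp_neg]; ring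
      rw [h3]
      rw [mul_one_div, div_le_one (Real.exp_pos _)]
      exact h2
    nlinarith [Real.exp_pos (2*|K₀|)]
  calc σ * |Real.tanh A - Real.tanh B|
      ≤ σ * (4 * |A - B| * Real.exp (|A - B| - |A| - |B|)) := by
        exact mul_le_mul_of_nonneg_left key (le_of_lt hσpos)
    _ ≤ σ * (4 * ((-μ * τ)/2 * u) * Real.exp (2 * |K₀| - 2 * u)) := by
        apply mul_le_mul_of_nonneg_left _ (le_of_lt hσpos)
        apply mul_le_mul (by nlinarith [abs_nonneg (A-B)]) (Real.exp_le_exp.mpr hexp)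
          (le_of_lt (Real.exp_pos _)) (by positivity)
    _ = 2 * σ * (-μ) * (u * Real.exp (2*|K₀| - 2*u)) * τ := by ring
    _ ≤ 2 * σ * (-μ) * Real.exp (2 * |K₀|) * τ := by
        have : 2 * σ * (-μ) * (u * Real.exp (2*|K₀| - 2*u))
            ≤ 2 * σ * (-μ) * Real.exp (2*|K₀|) :=
          mul_le_mul_of_nonneg_left hue (by nlinarith)
        nlinarith
end

section
/- Let μ, κ ∈ ℝ with μ < 0 and κ < 0, set σ = √(μ/κ), and let K₀ ∈ ℝ. For τ > 0 define q̃₁^τ(x) = ( σ² √(κ(μτ − 1)/2) / (1 − μτ) ) · sech²( σ √(κ(μτ − 1)/2) x + K₀ ), and define v(x) = σ² √(−κ/2) · sech²( σ √(−κ/2) x + K₀ ), which equals the derivative (u⁻)'(x) of the defocusing NLS ground state u⁻(x) = σ tanh( σ √(−κ/2) x + K₀ ). Then there exist constants τ₀ > 0 and C > 0 such that for all τ ∈ (0, τ₀) and all x ∈ ℝ, |q̃₁^τ(x) − v(x)| ≤ C τ. In particular, q̃₁^τ converges uniformly on ℝ, and linearly in τ, to (u⁻)' as τ → 0. -/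
open Real

lemma abs_le_cosh (t : ℝ) : |t| ≤ Real.cosh t := by
  have key : ∀ s : ℝ, 0 ≤ s → s ≤ Real.cosh s := by
    intro s hs
    have h1 := Real.add_one_le_exp (s/2)
    have h2 : Real.exp (s/2) * Real.exp (s/2) = Real.exp s := by
      rw [← Real.exp_add]; ring_nf
    have h3 := Real.exp_pos (-s)
    rw [Real.cosh_eq]
    nlinarith [sq_nonneg (1 - s/2), Real.exp_pos (s/2)]
  rcases le_total 0 t with h | h
  · rw [abs_of_nonneg h]; exact key t h
  · rw [abs_of_nonpos h, ← Real.cosh_neg]; exact key (-t) (by linarith)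

lemma abs_sinh_le_cosh (t : ℝ) : |Real.sinh t| ≤ Real.cosh t := by
  rw [abs_le, Real.sinh_eq, Real.cosh_eq]
  constructor <;> nlinarith [Real.exp_pos t, Real.exp_pos (-t)]

lemma sech_sq_lip (K₀ x c d : ℝ) (hc : 0 < c) (hcd : c ≤ d) :
    |(1 / Real.cosh (d * x + K₀)) ^ 2 - (1 / Real.cosh (c * x + K₀)) ^ 2|
      ≤ 2 * (1 + |K₀|) / c * (d - c) := by
  set f : ℝ → ℝ := fun s => (1 / Real.cosh (s * x + K₀)) ^ 2 with hf
  set f' : ℝ → ℝ := fun s =>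
    2 * (1 / Real.cosh (s * x + K₀)) ^ 1 *
      (-(Real.sinh (s * x + K₀) * x) / Real.cosh (s * x + K₀) ^ 2) with hf'
  have hderiv : ∀ s ∈ Set.Icc c d, HasDerivWithinAt f (f' s) (Set.Icc c d) s := by
    intro s _
    have h1 : HasDerivAt (fun s : ℝ => s * x + K₀) x s := by
      simpa using ((hasDerivAt_id s).mul_const x).add_const K₀
    have h2 : HasDerivAt (fun s : ℝ => Real.cosh (s * x + K₀))
        (Real.sinh (s * x + K₀) * x) s :=
      h1.cosh
    have h3 : HasDerivAt (fun s : ℝ => 1 / Real.cosh (s * x + K₀))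
        (-(Real.sinh (s * x + K₀) * x) / Real.cosh (s * x + K₀) ^ 2) s := by
      simpa [one_div] using h2.fun_inv (Real.cosh_pos (s * x + K₀)).ne'
    exact ((h3.pow 2).hasDerivWithinAt)
  have bound : ∀ s ∈ Set.Ico c d, ‖f' s‖ ≤ 2 * (1 + |K₀|) / c := by
    intro s hs
    set T := s * x + K₀ with hT
    have hc1 : 1 ≤ Real.cosh T := Real.one_le_cosh T
    have hc0 : 0 < Real.cosh T := by linarith
    have hTc := abs_le_cosh T
    have hsc := abs_sinh_le_cosh T
    have hxs : |x| * s ≤ |T| + |K₀| := by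
      have : |s * x| = |T - K₀| := by rw [hT]; ring_nf
      have h2 : |T - K₀| ≤ |T| + |K₀| := abs_sub T K₀
      calc |x| * s = |s * x| := by rw [abs_mul, abs_of_nonneg (hc.trans_le hs.1).le]; ring
        _ ≤ |T| + |K₀| := this ▸ h2
    have hs0 : c ≤ s := hs.1
    have hx0 : 0 ≤ |x| := abs_nonneg x
    have hK0 : 0 ≤ |K₀| := abs_nonneg K₀
    rw [Real.norm_eq_abs, hf']
    have heq : |2 * (1 / Real.cosh T) ^ 1 * (-(Real.sinh T * x) / Real.cosh T ^ 2)|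
        = 2 * |Real.sinh T| * |x| / Real.cosh T ^ 3 := by
      rw [abs_mul, abs_mul, abs_div, abs_neg, abs_mul, abs_pow, abs_pow,
        abs_of_pos (by norm_num : (0:ℝ) < 2), abs_one_div, abs_of_pos hc0]
      field_simp
    rw [heq, div_le_div_iff₀ (by positivity) hc]
    -- 2 * |sinh T| * |x| * c ≤ 2 * (1 + |K₀|) * cosh T ^ 3
    have hA : |x| * c ≤ |T| + |K₀| :=
      le_trans (mul_le_mul_of_nonneg_left hs0 hx0) hxs
    have hB : |Real.sinh T| * (|x| * c) ≤ Real.cosh T * (Real.cosh T + |K₀|) :=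
      mul_le_mul hsc (hA.trans (by linarith)) (by positivity) hc0.le
    nlinarith [hB, mul_pos hc0 hc0, sq_nonneg (Real.cosh T - 1),
      mul_le_mul_of_nonneg_left hc1 (mul_nonneg hK0 hc0.le),
      mul_le_mul_of_nonneg_left hc1 (mul_nonneg hK0 (mul_pos hc0 hc0).le),
      mul_le_mul_of_nonneg_left hc1 (mul_pos hc0 hc0).le]
  have := norm_image_sub_le_of_norm_deriv_le_segment' hderiv bound d
    (Set.right_mem_Icc.2 hcd)
  simpa [Real.norm_eq_abs, hf] using this

set_option maxHeartbeats 1000000 in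
/-- The second components q̃₁^τ of the standing fronts converge
uniformly on ℝ, linearly in τ, to (u⁻)'(x) = σ²√(−κ/2) sech²(σ√(−κ/2)x + K₀)
as τ → 0. -/
theorem nlsh_front_derivative_uniform_linear_convergence (μ κ : ℝ)
    (hμ : μ < 0) (hκ : κ < 0) (K₀ : ℝ)
    (σ : ℝ) (hσ : σ = Real.sqrt (μ / κ)) :
    ∃ τ₀ > 0, ∃ C > 0, ∀ τ : ℝ, 0 < τ → τ < τ₀ → ∀ x : ℝ,
      |(σ ^ 2 * Real.sqrt (κ * (μ * τ - 1) / 2) / (1 - μ * τ)) *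
          (1 / Real.cosh (σ * Real.sqrt (κ * (μ * τ - 1) / 2) * x + K₀)) ^ 2
        - σ ^ 2 * Real.sqrt (-κ / 2) *
          (1 / Real.cosh (σ * Real.sqrt (-κ / 2) * x + K₀)) ^ 2| ≤ C * τ := by
  have hσ0 : 0 < σ := by
    rw [hσ]; exact Real.sqrt_pos.2 (div_pos_of_neg_of_neg hμ hκ)
  set a := Real.sqrt (-κ / 2) with ha
  have ha0 : 0 < a := Real.sqrt_pos.2 (by linarith)
  set B := σ ^ 2 * a with hB
  have hB0 : 0 < B := by positivity
  refine ⟨1, one_pos, B * (-μ) * (2 + |K₀|),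
    mul_pos (mul_pos hB0 (by linarith)) (by positivity), ?_⟩
  intro τ hτ0 hτ1 x
  set r := Real.sqrt (1 - μ * τ) with hrdef
  have h1μτ : (1:ℝ) ≤ 1 - μ * τ := by nlinarith
  have hr2 : r ^ 2 = 1 - μ * τ := Real.sq_sqrt (by linarith)
  have hr1 : 1 ≤ r := by
    have := Real.sqrt_le_sqrt h1μτ
    rwa [Real.sqrt_one] at this
  have hr0 : 0 < r := by linarith
  have hsqrt : Real.sqrt (κ * (μ * τ - 1) / 2) = a * r := by
    rw [show κ * (μ * τ - 1) / 2 = (-κ / 2) * (1 - μ * τ) by ring,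
      Real.sqrt_mul (by linarith : (0:ℝ) ≤ -κ / 2)]
  rw [hsqrt]
  set w := σ * (a * r) * x + K₀ with hw
  set u := σ * a * x + K₀ with hu
  have hco : σ ^ 2 * (a * r) / (1 - μ * τ) = B / r := by
    rw [← hr2, hB]; field_simp
  rw [hco]
  set Sw := (1 / Real.cosh w) ^ 2 with hSw
  set Su := (1 / Real.cosh u) ^ 2 with hSu
  have hSw1 : Sw ≤ 1 := by
    rw [hSw]
    have := Real.one_le_cosh w
    rw [div_pow, one_pow]
    exact div_le_one_of_le₀ (by nlinarith) (by positivity)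
  have hSw0 : 0 ≤ Sw := by positivity
  -- r - 1 and 1 - 1/r bounds
  have hrm1 : r - 1 ≤ -μ * τ / 2 := by nlinarith
  have hinv : 1 - 1 / r ≤ -μ * τ / 2 := by
    have h : 1 - 1 / r ≤ r - 1 := by
      rw [sub_le_sub_iff]
      have : 1 / r ≥ 2 - r := by
        rw [ge_iff_le, le_div_iff₀ hr0]; nlinarith
      linarith
    linarith
  have hinv0 : 0 ≤ 1 - 1 / r := by
    have : 1 / r ≤ 1 := by rw [div_le_one hr0]; exact hr1
    linarith
  -- Lipschitz bound on the sech² factor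
  have hlip : |Sw - Su| ≤ 2 * (1 + |K₀|) / (σ * a) * (σ * (a * r) - σ * a) := by
    have := sech_sq_lip K₀ x (σ * a) (σ * (a * r)) (by positivity)
      (by nlinarith)
    rw [hSw, hSu, hw, hu]
    exact this
  have hlip2 : |Sw - Su| ≤ 2 * (1 + |K₀|) * (r - 1) := by
    have heq : 2 * (1 + |K₀|) / (σ * a) * (σ * (a * r) - σ * a)
        = 2 * (1 + |K₀|) * (r - 1) := by
      field_simp
    rw [heq] at hlip; exact hlip
  clear_value Sw Su w u
  have hSu0 : 0 ≤ Su := by rw [hSu]; positivity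
  clear_value B a r
  have hK0 : (0:ℝ) ≤ |K₀| := abs_nonneg K₀
  -- assemble
  have h1 : B / r * Sw - B * Su = B * (Sw - Su) - B * ((1 - 1 / r) * Sw) := by
    field_simp; ring
  have key : |B / r * Sw - B * Su| ≤ B * |Sw - Su| + B * (1 - 1 / r) := by
    calc |B / r * Sw - B * Su|
        = |B * (Sw - Su) - B * ((1 - 1 / r) * Sw)| := by rw [h1]
      _ ≤ |B * (Sw - Su)| + |B * ((1 - 1 / r) * Sw)| := abs_sub _ _
      _ ≤ B * |Sw - Su| + B * (1 - 1 / r) := by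
          rw [abs_mul B, abs_mul B, abs_of_pos hB0]
          have h2 : |(1 - 1 / r) * Sw| ≤ 1 - 1 / r := by
            rw [abs_mul, abs_of_nonneg hinv0, abs_of_nonneg hSw0]
            nlinarith
          nlinarith [abs_nonneg (Sw - Su)]
  have hmid : B * |Sw - Su| + B * (1 - 1 / r)
      ≤ B * (2 * (1 + |K₀|) * (-μ * τ / 2)) + B * (-μ * τ / 2) := by
    have h3 : 2 * (1 + |K₀|) * (r - 1) ≤ 2 * (1 + |K₀|) * (-μ * τ / 2) := by
      nlinarith
    have h4 := hlip2.trans h3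
    nlinarith [mul_le_mul_of_nonneg_left hinv hB0.le,
      mul_le_mul_of_nonneg_left h4 hB0.le]
  have hfin : B * (2 * (1 + |K₀|) * (-μ * τ / 2)) + B * (-μ * τ / 2)
      ≤ B * (-μ) * (2 + |K₀|) * τ := by nlinarith
  linarith [key.trans (hmid.trans hfin)]
end

section
/- Let n be a finite index type, τ > 0, κ ∈ ℝ, and let D be an n × n complex matrix that is skew-Hermitian, i.e. Dᴴ = −D. Let Q₀, Q₁ : ℝ → (n → ℂ) be differentiable functions satisfying, for every t ∈ ℝ and every index j, (d/dt Q₀(t))ⱼ = i (D · Q₁(t))ⱼ + i κ |Q₀(t)ⱼ|² Q₀(t)ⱼ and τ (d/dt Q₁(t))ⱼ = i Q₁(t)ⱼ − i (D · Q₀(t))ⱼ, where D · v denotes matrix-vector multiplication. Then the discrete mass t ↦ ‖Q₀(t)‖² + τ ‖Q₁(t)‖² (with ‖v‖² = Σⱼ |vⱼ|²) is constant in t. -/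
open Matrix


private lemma hasDerivAt_abs_sq {f : ℝ → ℂ} {f' : ℂ} {t : ℝ}
    (hf : HasDerivAt f f' t) :
    HasDerivAt (fun t => ‖f t‖ ^ 2)
      ((f' * starRingEnd ℂ (f t) + f t * starRingEnd ℂ f').re) t := by
  have hstar : HasDerivAt (fun t => starRingEnd ℂ (f t)) (starRingEnd ℂ f') t :=
    Complex.conjCLE.toContinuousLinearMap.hasFDerivAt.comp_hasDerivAt t hf
  have hmul := hf.mul hstar
  have h2 : HasDerivAt (fun t => (f t * starRingEnd ℂ (f t)).re)
      ((f' * starRingEnd ℂ (f t) + f t * starRingEnd ℂ f').re) t :=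
    Complex.reCLM.hasFDerivAt.comp_hasDerivAt t hmul
  have hfun : (fun t => (f t * starRingEnd ℂ (f t)).re) = fun t => ‖f t‖ ^ 2 := by
    funext s
    simp [Complex.mul_conj, Complex.sq_norm]
  exact hfun ▸ h2


/-- If D is skew-Hermitian, then solutions of the semidiscrete NLSH
system ∂ₜQ₀ = iDQ₁ + iκ|Q₀|²Q₀ (componentwise), τ∂ₜQ₁ = iQ₁ − iDQ₀ conserve the
discrete mass ‖Q₀‖² + τ‖Q₁‖². -/
theorem nlsh_semidiscrete_mass_conservation {n : Type*} [Fintype n]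
    (τ κ : ℝ) (hτ : 0 < τ)
    (D : Matrix n n ℂ) (hD : D.conjTranspose = -D)
    (Q₀ Q₁ : ℝ → n → ℂ)
    (hQ₀ : Differentiable ℝ Q₀) (hQ₁ : Differentiable ℝ Q₁)
    (heq₀ : ∀ (t : ℝ) (j : n),
      deriv Q₀ t j = Complex.I * D.mulVec (Q₁ t) j
        + Complex.I * (κ : ℂ) * ((‖Q₀ t j‖ : ℂ)) ^ 2 * Q₀ t j)
    (heq₁ : ∀ (t : ℝ) (j : n),
      (τ : ℂ) * deriv Q₁ t j = Complex.I * Q₁ t j - Complex.I * D.mulVec (Q₀ t) j) :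
    ∀ t₁ t₂ : ℝ,
      ((∑ j, ‖Q₀ t₁ j‖ ^ 2) + τ * ∑ j, ‖Q₁ t₁ j‖ ^ 2)
      = ((∑ j, ‖Q₀ t₂ j‖ ^ 2) + τ * ∑ j, ‖Q₁ t₂ j‖ ^ 2) := by

  have hDe : ∀ j k : n, starRingEnd ℂ (D j k) = - D k j := by
    intro j k
    have := congrFun (congrFun hD k) j
    simpa [Matrix.conjTranspose_apply] using this
  have key1 : ∀ x y : n → ℂ,
      (∑ j, starRingEnd ℂ (x j) * D.mulVec y j)
        = - ∑ j, starRingEnd ℂ (D.mulVec x j) * y j := by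
    intro x y
    have expand : ∀ j, starRingEnd ℂ (D.mulVec x j) * y j
        = ∑ k, -(D k j * starRingEnd ℂ (x k) * y j) := by
      intro j
      simp only [Matrix.mulVec, dotProduct, map_sum, _root_.map_mul, hDe,
        Finset.sum_mul]
      exact Finset.sum_congr rfl fun k _ => by ring
    calc ∑ j, starRingEnd ℂ (x j) * D.mulVec y j
        = ∑ j, ∑ k, starRingEnd ℂ (x j) * D j k * y k := by
          simp [Matrix.mulVec, dotProduct, Finset.mul_sum, mul_assoc]
      _ = ∑ k, ∑ j, starRingEnd ℂ (x j) * D j k * y k := Finset.sum_comm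
      _ = - ∑ j, starRingEnd ℂ (D.mulVec x j) * y j := by
          simp only [expand, Finset.sum_neg_distrib, neg_neg]
          exact Finset.sum_congr rfl fun k _ => Finset.sum_congr rfl fun j _ => by ring
  have hderiv : ∀ t : ℝ,
      HasDerivAt (fun t => ((∑ j, ‖Q₀ t j‖ ^ 2)
          + τ * ∑ j, ‖Q₁ t j‖ ^ 2)) 0 t := by
    intro t
    have h0 : ∀ j, HasDerivAt (fun t => Q₀ t j) (deriv Q₀ t j) t := fun j =>
      hasDerivAt_pi.mp (hQ₀ t).hasDerivAt j
    have h1 : ∀ j, HasDerivAt (fun t => Q₁ t j) (deriv Q₁ t j) t := fun j =>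
      hasDerivAt_pi.mp (hQ₁ t).hasDerivAt j
    have H0 : HasDerivAt (fun t => ∑ j, ‖Q₀ t j‖ ^ 2)
        (∑ j, (deriv Q₀ t j * starRingEnd ℂ (Q₀ t j)
          + Q₀ t j * starRingEnd ℂ (deriv Q₀ t j)).re) t :=
      HasDerivAt.fun_sum fun j _ => hasDerivAt_abs_sq (h0 j)
    have H1 : HasDerivAt (fun t => τ * ∑ j, ‖Q₁ t j‖ ^ 2)
        (τ * ∑ j, (deriv Q₁ t j * starRingEnd ℂ (Q₁ t j)
          + Q₁ t j * starRingEnd ℂ (deriv Q₁ t j)).re) t :=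
      (HasDerivAt.fun_sum fun j _ => hasDerivAt_abs_sq (h1 j)).const_mul τ
    have Htot := H0.add H1
    have hkey : (∑ j, starRingEnd ℂ (Q₀ t j) * D.mulVec (Q₁ t) j)
        = - ∑ j, starRingEnd ℂ (D.mulVec (Q₀ t) j) * Q₁ t j := key1 (Q₀ t) (Q₁ t)
    -- per-index substitution of the equations of motion
    have hL : (∑ j, (deriv Q₀ t j * starRingEnd ℂ (Q₀ t j)
            + Q₀ t j * starRingEnd ℂ (deriv Q₀ t j)))
          + (τ : ℂ) * ∑ j, (deriv Q₁ t j * starRingEnd ℂ (Q₁ t j)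
            + Q₁ t j * starRingEnd ℂ (deriv Q₁ t j))
        = ∑ j, Complex.I *
            ((starRingEnd ℂ (Q₀ t j) * D.mulVec (Q₁ t) j
              - Q₀ t j * starRingEnd ℂ (D.mulVec (Q₁ t) j))
            + (starRingEnd ℂ (D.mulVec (Q₀ t) j) * Q₁ t j
              - D.mulVec (Q₀ t) j * starRingEnd ℂ (Q₁ t j))) := by
      rw [Finset.mul_sum, ← Finset.sum_add_distrib]
      refine Finset.sum_congr rfl fun j _ => ?_
      have e1 : (τ : ℂ) * (deriv Q₁ t j * starRingEnd ℂ (Q₁ t j)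
          + Q₁ t j * starRingEnd ℂ (deriv Q₁ t j))
          = ((τ : ℂ) * deriv Q₁ t j) * starRingEnd ℂ (Q₁ t j)
            + Q₁ t j * starRingEnd ℂ ((τ : ℂ) * deriv Q₁ t j) := by
        simp only [_root_.map_mul, Complex.conj_ofReal]
        ring
      rw [e1, heq₁ t j, heq₀ t j]
      simp only [map_add, _root_.map_mul, map_sub, map_pow, Complex.conj_I,
        Complex.conj_ofReal]
      ring
    -- the complex sum vanishes
    have hzero : (∑ j, (deriv Q₀ t j * starRingEnd ℂ (Q₀ t j)
            + Q₀ t j * starRingEnd ℂ (deriv Q₀ t j)))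
          + (τ : ℂ) * ∑ j, (deriv Q₁ t j * starRingEnd ℂ (Q₁ t j)
            + Q₁ t j * starRingEnd ℂ (deriv Q₁ t j)) = 0 := by
      rw [hL, ← Finset.mul_sum]
      have hsplit : ∑ j, ((starRingEnd ℂ (Q₀ t j) * D.mulVec (Q₁ t) j
              - Q₀ t j * starRingEnd ℂ (D.mulVec (Q₁ t) j))
            + (starRingEnd ℂ (D.mulVec (Q₀ t) j) * Q₁ t j
              - D.mulVec (Q₀ t) j * starRingEnd ℂ (Q₁ t j)))
          = ((∑ j, starRingEnd ℂ (Q₀ t j) * D.mulVec (Q₁ t) j)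
              - starRingEnd ℂ (∑ j, starRingEnd ℂ (Q₀ t j) * D.mulVec (Q₁ t) j))
            + ((∑ j, starRingEnd ℂ (D.mulVec (Q₀ t) j) * Q₁ t j)
              - starRingEnd ℂ (∑ j, starRingEnd ℂ (D.mulVec (Q₀ t) j) * Q₁ t j)) := by
        simp only [map_sum, _root_.map_mul, Complex.conj_conj, ← Finset.sum_sub_distrib,
          ← Finset.sum_add_distrib]
      rw [hsplit, hkey]
      simp only [map_neg]
      ring
    have hre := congrArg Complex.re hzero
    have hval : (∑ j, (deriv Q₀ t j * starRingEnd ℂ (Q₀ t j)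
          + Q₀ t j * starRingEnd ℂ (deriv Q₀ t j)).re)
        + τ * ∑ j, (deriv Q₁ t j * starRingEnd ℂ (Q₁ t j)
          + Q₁ t j * starRingEnd ℂ (deriv Q₁ t j)).re = 0 := by
      simpa [Complex.re_sum, Complex.add_re, Complex.re_ofReal_mul] using hre
    rw [hval] at Htot
    exact Htot
  intro t₁ t₂
  exact is_const_of_deriv_eq_zero (fun t => (hderiv t).differentiableAt)
    (fun t => (hderiv t).deriv) t₁ t₂
end
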